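/- arXiv:1305.5797 — 4 statements merged into one kernel-verified Lean document; each statement's English description precedes it below -/
import Mathlib

section
/- Let n ≥ 1 and let k₁, …, k_n be density kernels with rectangular supports F₁ × G₁, …, F_n × G_n, and suppose there are numbers κ_m ≥ 1 with k_m(s₁,t₁)k_m(s₂,t₂) ≤ κ_m² k_m(s₂,t₁)k_m(s₁,t₂) for all s₁, s₂ ∈ F_m, t₁, t₂ ∈ G_m, for each 1 ≤ m ≤ n. Define K_m(s, E) = ∫_E k_m(s,t) λ(dt), and recursively K^{n,n} = K_n and K^{m−1,n}(s, E) = ∫_S k_{m−1}(s,t) K^{m,n}(t, E) λ(dt) for m = n, n−1, …, 2, and set Kⁿ = K^{1,n}. Suppose Kⁿ(s, S) > 0 for all s ∈ F₁. Then for any two finite nonnegative measures x, y on (S, 𝓕) with x(F₁) > 0 and y(F₁) > 0, writing xKⁿ for the measure E ↦ ∫_S Kⁿ(s, E) x(ds) and ‖xKⁿ‖ = xKⁿ(S), one has δ_TV( xKⁿ/‖xKⁿ‖ , yKⁿ/‖yKⁿ‖ ) ≤ 2 ∏_{m=1}^n (κ_m − 1)/(κ_m + 1). -/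
/-!
Birkhoff's contraction argument, for `supDiff μ ν = sup_E (μ E - ν E)`, so that
`δ_TV(μ, ν) = supDiff μ ν + supDiff ν μ`.

A pointwise cross-ratio bound `p(s,t) p(s',t') ≤ κ² p(s',t) p(s,t')` on densities integrates to
the same bound `P(s,B) P(s',C) ≤ κ² P(s',B) P(s,C)` on sets. If `P` is Markov and `σ`, `τ` have
the same mass `a`, integrating once more with `B = E`, `C = Eᶜ` gives
`σP(E) τP(Eᶜ) ≤ κ² τP(E) σP(Eᶜ)`; together with `σP(E) + σP(Eᶜ) = a = τP(E) + τP(Eᶜ)` this forces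
`σP(E) - τP(E) ≤ (κ-1)/(κ+1) a`. Applied to the two parts of a Hahn decomposition of `α - β`,
a Markov kernel contracts `supDiff` by `(κ-1)/(κ+1)`.

The `m`-th step of `Kⁿ`, with density `k_m(s,t) K^{m+1,n}(t,S)`, becomes Markov after division
by its mass `K^{m,n}(s,S)`, provided the input measure is weighted by `K^{m,n}(·,S)`; so the
contraction factors multiply, and for normalized inputs `supDiff ≤ 1`.
-/

open MeasureTheory
open scoped NNReal ENNReal

/-- Composition of a finite list of density kernels against the base measure `lam`,
restricted to a set `E` in the last coordinate:
`compKer lam [k₁, …, k_n] s E = ∫ k₁(s,t₁) ⋯ ∫ k_n(t_{n-1}, t_n) 1_E(t_n) λ(dt_n) ⋯ λ(dt₁)`,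
so that `compKer lam [k₁, …, k_n] = Kⁿ = K^{1,n}` of the recursive definition. -/
noncomputable def compKer {S : Type*} [MeasurableSpace S] (lam : Measure S) :
    List (S → S → ℝ≥0) → S → Set S → ℝ≥0∞
  | [] => fun s E => E.indicator (fun _ => (1 : ℝ≥0∞)) s
  | kk :: ks => fun s E => ∫⁻ t, (kk s t : ℝ≥0∞) * compKer lam ks t E ∂lam

open ProbabilityTheory Set

section SupDiff

variable {X : Type*} [MeasurableSpace X]

noncomputable def supDiff (μ ν : Measure X) : ℝ≥0∞ :=
  ⨆ (E : Set X) (_ : MeasurableSet E), μ E - ν E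

lemma le_supDiff {μ ν : Measure X} {E : Set X} (hE : MeasurableSet E) :
    μ E - ν E ≤ supDiff μ ν :=
  le_iSup₂ (f := fun (E : Set X) (_ : MeasurableSet E) => μ E - ν E) E hE

lemma supDiff_le {μ ν : Measure X} {c : ℝ≥0∞} (h : ∀ E, MeasurableSet E → μ E - ν E ≤ c) :
    supDiff μ ν ≤ c :=
  iSup₂_le h

lemma supDiff_le_measure_univ (μ ν : Measure X) : supDiff μ ν ≤ μ univ :=
  supDiff_le fun _ _ => tsub_le_self.trans (measure_mono (subset_univ _))

lemma measure_div_measure_univ_ne_top (μ : Measure X) (E : Set X) : μ E / μ univ ≠ ∞ :=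
  ne_top_of_le_ne_top ENNReal.one_ne_top
    (ENNReal.div_le_of_le_mul (by rw [one_mul]; exact measure_mono (subset_univ E)))

lemma exists_eq_add_eq_add_supDiff (μ ν : Measure X) [IsFiniteMeasure μ] [IsFiniteMeasure ν] :
    ∃ σ τ c : Measure X, μ = σ + c ∧ ν = τ + c ∧ σ univ ≤ supDiff μ ν := by
  obtain ⟨A, hA, hνμ, hμν⟩ := hahn_decomposition μ ν
  have restrict_le {ρ ρ' : Measure X} {B : Set X} (hB : MeasurableSet B)
      (h : ∀ t, MeasurableSet t → t ⊆ B → ρ t ≤ ρ' t) : ρ.restrict B ≤ ρ'.restrict B :=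
    Measure.le_iff.mpr fun t ht => by
      rw [Measure.restrict_apply ht, Measure.restrict_apply ht]
      exact h _ (ht.inter hB) inter_subset_right
  have hA_le := restrict_le hA hνμ
  have hAc_le := restrict_le hA.compl hμν
  refine ⟨μ.restrict A - ν.restrict A, ν.restrict Aᶜ - μ.restrict Aᶜ,
    ν.restrict A + μ.restrict Aᶜ, ?_, ?_, ?_⟩
  · rw [← add_assoc, Measure.sub_add_cancel_of_le hA_le, Measure.restrict_add_restrict_compl hA]
  · rw [add_left_comm, Measure.sub_add_cancel_of_le hAc_le,
      Measure.restrict_add_restrict_compl hA]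
  · rw [Measure.sub_apply MeasurableSet.univ hA_le, Measure.restrict_apply_univ,
      Measure.restrict_apply_univ]
    exact le_supDiff hA

lemma sSup_toReal_sub_le {f g : Set X → ℝ≥0∞} {b : ℝ} (hb : 0 ≤ b)
    (hg : ∀ E, MeasurableSet E → g E ≠ ∞) (h : ∀ E, MeasurableSet E → f E - g E ≤ .ofReal b) :
    sSup {d : ℝ | ∃ E : Set X, MeasurableSet E ∧ d = (f E).toReal - (g E).toReal} ≤ b := by
  refine Real.sSup_le ?_ hb
  rintro d ⟨E, hE, rfl⟩
  calc (f E).toReal - (g E).toReal ≤ (f E - g E).toReal := ENNReal.le_toReal_sub (hg E hE)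
    _ ≤ b := ENNReal.toReal_le_of_le_ofReal hb (h E hE)

end SupDiff

-- AM-GM: `qr ≤ (q + r)² / 4` turns the cross-ratio bound into a quadratic inequality in `q + r`.
lemma sub_le_div_mul_of_mul_le_sq_mul {p q r s a κ : ℝ} (hκ : 1 ≤ κ) (hq : 0 ≤ q) (hr : 0 ≤ r)
    (hpq : p + q = a) (hrs : r + s = a) (hcross : p * s ≤ κ ^ 2 * (r * q)) :
    p - r ≤ (κ - 1) / (κ + 1) * a := by
  have hsum : 2 * a ≤ (κ + 1) * (q + r) := by
    by_contra! h
    have hpos : 0 < 2 * a + (κ - 1) * (q + r) := by nlinarith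
    nlinarith [mul_pos (sub_pos.2 h) hpos, mul_nonneg (by nlinarith : (0:ℝ) ≤ κ ^ 2 - 1)
      (sq_nonneg (q - r))]
  rw [div_mul_eq_mul_div, le_div_iff₀ (by linarith)]
  nlinarith

lemma ENNReal.sub_le_ofReal_div_mul_of_mul_le {p q r s a : ℝ≥0∞} {κ : ℝ} (hκ : 1 ≤ κ)
    (ha : a ≠ ∞) (hpq : p + q = a) (hrs : r + s = a)
    (hcross : p * s ≤ .ofReal (κ ^ 2) * (r * q)) :
    p - r ≤ .ofReal ((κ - 1) / (κ + 1)) * a := by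
  have hβ : 0 ≤ (κ - 1) / (κ + 1) := div_nonneg (by linarith) (by linarith)
  have ne_top_of_add_eq {u v : ℝ≥0∞} (h : u + v = a) : u ≠ ∞ ∧ v ≠ ∞ := by
    rw [← h] at ha; exact ENNReal.add_ne_top.mp ha
  obtain ⟨hp, hq⟩ := ne_top_of_add_eq hpq
  obtain ⟨hr, hs⟩ := ne_top_of_add_eq hrs
  have toReal_add_eq {u v : ℝ≥0∞} (h : u + v = a) : u.toReal + v.toReal = a.toReal := by
    rw [← h, ENNReal.toReal_add (ne_top_of_add_eq h).1 (ne_top_of_add_eq h).2]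
  have hcross' := ENNReal.toReal_mono (by finiteness) hcross
  simp only [ENNReal.toReal_mul, ENNReal.toReal_ofReal (sq_nonneg κ)] at hcross'
  rw [tsub_le_iff_right, ← ENNReal.toReal_le_toReal hp (by finiteness), ENNReal.toReal_add
    (by finiteness) hr, ENNReal.toReal_mul, ENNReal.toReal_ofReal hβ]
  linarith [sub_le_div_mul_of_mul_le_sq_mul hκ ENNReal.toReal_nonneg ENNReal.toReal_nonneg
    (toReal_add_eq hpq) (toReal_add_eq hrs) hcross']

lemma lintegral_mul_lintegral_le {α β : Type*} [MeasurableSpace α] [MeasurableSpace β]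
    {μ : Measure α} {ν : Measure β} {f f' : α → ℝ≥0∞} {g g' : β → ℝ≥0∞} {K : ℝ≥0∞}
    (hK : K ≠ ∞) (hf : AEMeasurable f μ) (hg : AEMeasurable g ν) (hf' : AEMeasurable f' μ)
    (hg' : AEMeasurable g' ν) (h : ∀ᵐ a ∂μ, ∀ᵐ b ∂ν, f a * g b ≤ K * (f' a * g' b)) :
    (∫⁻ a, f a ∂μ) * (∫⁻ b, g b ∂ν) ≤ K * ((∫⁻ a, f' a ∂μ) * (∫⁻ b, g' b ∂ν)) := by
  rw [← lintegral_lintegral_mul hf hg, ← lintegral_lintegral_mul hf' hg',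
    ← lintegral_const_mul' _ _ hK]
  refine lintegral_mono_ae (h.mono fun a ha => ?_)
  rw [← lintegral_const_mul' _ _ hK]
  exact lintegral_mono_ae ha

section CrossRatio

variable {X Y : Type*}

def CrossRatioLE (K : ℝ≥0∞) (w : X → Y → ℝ≥0∞) : Prop :=
  ∀ s s' t t', w s t * w s' t' ≤ K * (w s' t * w s t')

lemma CrossRatioLE.mul_left {K : ℝ≥0∞} {w : X → Y → ℝ≥0∞} (hw : CrossRatioLE K w)
    (f : X → ℝ≥0∞) : CrossRatioLE K fun s t => f s * w s t := fun s s' t t' =>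
  calc f s * w s t * (f s' * w s' t') = f s * f s' * (w s t * w s' t') := by ring
    _ ≤ f s * f s' * (K * (w s' t * w s t')) := by gcongr _ * ?_; exact hw s s' t t'
    _ = K * (f s' * w s' t * (f s * w s t')) := by ring

lemma CrossRatioLE.mul_right {K : ℝ≥0∞} {w : X → Y → ℝ≥0∞} (hw : CrossRatioLE K w)
    (g : Y → ℝ≥0∞) : CrossRatioLE K fun s t => w s t * g t := fun s s' t t' =>
  calc w s t * g t * (w s' t' * g t') = w s t * w s' t' * (g t * g t') := by ring
    _ ≤ K * (w s' t * w s t') * (g t * g t') := by gcongr ?_ * _; exact hw s s' t t'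
    _ = K * (w s' t * g t * (w s t' * g t')) := by ring

lemma CrossRatioLE.setLIntegral [MeasurableSpace Y] {K : ℝ≥0∞} (hK : K ≠ ∞)
    {w : X → Y → ℝ≥0∞} (hw : CrossRatioLE K w) (hm : ∀ s, Measurable (w s)) (μ : Measure Y) :
    CrossRatioLE K fun s (B : Set Y) => ∫⁻ t in B, w s t ∂μ := fun s s' _ _ =>
  lintegral_mul_lintegral_le hK (hm s).aemeasurable (hm s').aemeasurable
    (hm s').aemeasurable (hm s).aemeasurable
    (ae_of_all _ fun t => ae_of_all _ fun t' => hw s s' t t')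

lemma crossRatioLE_of_support_subset_prod {k : X → Y → ℝ≥0} {F : Set X} {G : Set Y} {κ : ℝ}
    (hsupp : ∀ s t, (s, t) ∉ F ×ˢ G → k s t = 0)
    (hcross : ∀ s₁ ∈ F, ∀ s₂ ∈ F, ∀ t₁ ∈ G, ∀ t₂ ∈ G,
      (k s₁ t₁ : ℝ) * (k s₂ t₂ : ℝ) ≤ κ ^ 2 * ((k s₂ t₁ : ℝ) * (k s₁ t₂ : ℝ))) :
    CrossRatioLE (.ofReal (κ ^ 2)) fun s t => (k s t : ℝ≥0∞) := by
  intro s s' t t'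
  by_cases hst : (s, t) ∈ F ×ˢ G
  · by_cases hst' : (s', t') ∈ F ×ˢ G
    · have h := hcross s hst.1 s' hst'.1 t hst.2 t' hst'.2
      simp only [← ENNReal.ofReal_coe_nnreal, ← ENNReal.ofReal_mul (NNReal.coe_nonneg _),
        ← ENNReal.ofReal_mul (sq_nonneg κ)]
      exact ENNReal.ofReal_le_ofReal h
    · simp [hsupp s' t' hst']
  · simp [hsupp s t hst]

end CrossRatio

section Contraction

variable {X Y : Type*} [MeasurableSpace X] [MeasurableSpace Y]

lemma comp_sub_comp_le_of_measure_univ_eq (P : Kernel X Y) {κ : ℝ} (hκ : 1 ≤ κ)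
    (hP : CrossRatioLE (.ofReal (κ ^ 2)) fun s B => P s B)
    {σ τ : Measure X} [IsFiniteMeasure σ] (hσ : ∀ᵐ s ∂σ, P s univ = 1)
    (hτ : ∀ᵐ s ∂τ, P s univ = 1) (hστ : σ univ = τ univ) {E : Set Y} (hE : MeasurableSet E) :
    (P ∘ₘ σ) E - (P ∘ₘ τ) E ≤ .ofReal ((κ - 1) / (κ + 1)) * σ univ := by
  have hmass {ρ : Measure X} (hρ : ∀ᵐ s ∂ρ, P s univ = 1) :
      (P ∘ₘ ρ) E + (P ∘ₘ ρ) Eᶜ = ρ univ := by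
    rw [measure_add_measure_compl hE, Measure.bind_apply .univ P.aemeasurable,
      lintegral_congr_ae hρ, lintegral_one]
  refine ENNReal.sub_le_ofReal_div_mul_of_mul_le hκ (measure_ne_top σ univ) (hmass hσ)
    (hστ ▸ hmass hτ) ?_
  simp only [Measure.bind_apply hE P.aemeasurable, Measure.bind_apply hE.compl P.aemeasurable]
  have hPm {B : Set Y} (hB : MeasurableSet B) {ρ : Measure X} :
      AEMeasurable (fun s => P s B) ρ := (P.measurable_coe hB).aemeasurable
  calc _ ≤ _ := lintegral_mul_lintegral_le ENNReal.ofReal_ne_top (hPm hE) (hPm hE.compl)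
        (hPm hE.compl) (hPm hE) (ae_of_all _ fun s => ae_of_all _ fun s' =>
          (hP s s' E Eᶜ).trans_eq (by ring))
    _ = _ := by ring

theorem supDiff_comp_le (P : Kernel X Y) {κ : ℝ} (hκ : 1 ≤ κ)
    (hP : CrossRatioLE (.ofReal (κ ^ 2)) fun s B => P s B)
    {α β : Measure X} [IsFiniteMeasure α] [IsFiniteMeasure β] (hα : ∀ᵐ s ∂α, P s univ = 1)
    (hβ : ∀ᵐ s ∂β, P s univ = 1) (hαβ : α univ = β univ) :
    supDiff (P ∘ₘ α) (P ∘ₘ β) ≤ .ofReal ((κ - 1) / (κ + 1)) * supDiff α β := by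
  obtain ⟨σ, τ, c, rfl, rfl, hσ⟩ := exists_eq_add_eq_add_supDiff α β
  have : IsFiniteMeasure σ := isFiniteMeasure_of_le (σ + c) (Measure.le_add_right le_rfl)
  have hc : c univ ≠ ∞ := (ENNReal.add_ne_top.mp (measure_ne_top (σ + c) univ)).2
  have hστ : σ univ = τ univ := by
    simpa only [Measure.add_apply, ENNReal.add_left_inj hc] using hαβ
  refine supDiff_le fun E hE => ?_
  calc (P ∘ₘ (σ + c)) E - (P ∘ₘ (τ + c)) E
      = ((P ∘ₘ σ) E + (P ∘ₘ c) E) - ((P ∘ₘ τ) E + (P ∘ₘ c) E) := by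
        rw [Measure.comp_add, Measure.comp_add, Measure.add_apply, Measure.add_apply]
    _ ≤ (P ∘ₘ σ) E - (P ∘ₘ τ) E := add_tsub_add_le_tsub_right
    _ ≤ .ofReal ((κ - 1) / (κ + 1)) * σ univ :=
        comp_sub_comp_le_of_measure_univ_eq P hκ hP (ae_add_measure_iff.mp hα).1
          (ae_add_measure_iff.mp hβ).1 hστ hE
    _ ≤ _ := by gcongr

end Contraction

section Normalization

variable {X Y : Type*} [MeasurableSpace X] [MeasurableSpace Y]

lemma withDensity_apply_univ_eq_comp (W : Kernel X Y) (ρ : Measure X) :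
    (ρ.withDensity fun s => W s univ) univ = (W ∘ₘ ρ) univ := by
  rw [withDensity_apply _ .univ, Measure.restrict_univ,
    Measure.bind_apply .univ (Kernel.aemeasurable _)]

noncomputable def normalizedKernel (W : Kernel X Y) [IsSFiniteKernel W] : Kernel X Y :=
  W.withDensity fun s _ => (W s univ)⁻¹

lemma normalizedKernel_apply (W : Kernel X Y) [IsSFiniteKernel W] (s : X) (B : Set Y) :
    normalizedKernel W s B = (W s univ)⁻¹ * W s B := by
  rw [normalizedKernel, Kernel.withDensity_apply' _
    (by exact (W.measurable_coe .univ).inv.comp measurable_fst), setLIntegral_const]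

lemma normalizedKernel_comp_withDensity (W : Kernel X Y) [IsFiniteKernel W] (μ : Measure X) :
    normalizedKernel W ∘ₘ μ.withDensity (fun s => W s univ) = W ∘ₘ μ := by
  ext B hB
  rw [Measure.bind_apply hB (Kernel.aemeasurable _), Measure.bind_apply hB (Kernel.aemeasurable _),
    lintegral_withDensity_eq_lintegral_mul _ (W.measurable_coe .univ)
      ((normalizedKernel W).measurable_coe hB)]
  refine lintegral_congr fun s => ?_
  rw [Pi.mul_apply, normalizedKernel_apply]
  exact ENNReal.mul_inv_cancel_left' (fun h => measure_mono_null (subset_univ B) h)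
    (fun h => absurd h (measure_ne_top _ _))

theorem supDiff_comp_le_supDiff_withDensity (W : Kernel X Y) [IsFiniteKernel W] {κ : ℝ}
    (hκ : 1 ≤ κ) (hW : CrossRatioLE (.ofReal (κ ^ 2)) fun s B => W s B)
    {μ ν : Measure X} [IsFiniteMeasure μ] [IsFiniteMeasure ν]
    (hμν : (W ∘ₘ μ) univ = (W ∘ₘ ν) univ) :
    supDiff (W ∘ₘ μ) (W ∘ₘ ν) ≤ .ofReal ((κ - 1) / (κ + 1)) *
      supDiff (μ.withDensity fun s => W s univ) (ν.withDensity fun s => W s univ) := by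
  have hfin (ρ : Measure X) [IsFiniteMeasure ρ] :
      IsFiniteMeasure (ρ.withDensity fun s => W s univ) :=
    ⟨by rw [withDensity_apply_univ_eq_comp]; exact measure_lt_top _ _⟩
  have hmarkov (ρ : Measure X) :
      ∀ᵐ s ∂(ρ.withDensity fun s => W s univ), normalizedKernel W s univ = 1 :=
    (ae_withDensity_iff (W.measurable_coe .univ)).mpr <| ae_of_all _ fun s hs => by
      rw [normalizedKernel_apply, ENNReal.inv_mul_cancel hs (measure_ne_top _ _)]
  have hcross : CrossRatioLE (.ofReal (κ ^ 2)) fun s B => normalizedKernel W s B := by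
    simpa only [normalizedKernel_apply] using hW.mul_left fun s => (W s univ)⁻¹
  rw [← normalizedKernel_comp_withDensity W μ, ← normalizedKernel_comp_withDensity W ν]
  exact supDiff_comp_le _ hκ hcross (hmarkov μ) (hmarkov ν)
    (by rw [withDensity_apply_univ_eq_comp, withDensity_apply_univ_eq_comp, hμν])

end Normalization

section DensityKernel

variable {X Y Z : Type*} [MeasurableSpace X] [MeasurableSpace Y] [MeasurableSpace Z]

noncomputable def densityKernel (lam : Measure Y) [SFinite lam] (w : X → Y → ℝ≥0∞) :
    Kernel X Y :=
  (Kernel.const X lam).withDensity w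

variable {lam : Measure Y} [SFinite lam] {w : X → Y → ℝ≥0∞}

lemma densityKernel_apply (hw : Measurable (Function.uncurry w)) (s : X) (B : Set Y) :
    densityKernel lam w s B = ∫⁻ t in B, w s t ∂lam := by
  rw [densityKernel, Kernel.withDensity_apply' _ hw, Kernel.const_apply]

lemma isFiniteKernel_densityKernel (hw : Measurable (Function.uncurry w))
    (hb : ∃ C < ∞, ∀ s, ∫⁻ t, w s t ∂lam ≤ C) : IsFiniteKernel (densityKernel lam w) :=
  let ⟨C, hC, hle⟩ := hb
  ⟨C, hC, fun s => by rw [densityKernel_apply hw, Measure.restrict_univ]; exact hle s⟩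

lemma CrossRatioLE.densityKernel {K : ℝ≥0∞} (hK : K ≠ ∞) (hcross : CrossRatioLE K w)
    (hw : Measurable (Function.uncurry w)) :
    CrossRatioLE K fun s B => densityKernel lam w s B := by
  simpa only [densityKernel_apply hw] using
    hcross.setLIntegral hK (fun _ => hw.of_uncurry_left) lam

lemma withDensity_densityKernel_comp (hw : Measurable (Function.uncurry w)) {g : Y → ℝ≥0∞}
    (hg : Measurable g) (μ : Measure X) :
    (densityKernel lam w ∘ₘ μ).withDensity g =
      densityKernel lam (fun s t => w s t * g t) ∘ₘ μ := by
  ext B hB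
  rw [withDensity_apply _ hB, ← lintegral_indicator hB, Measure.lintegral_bind
      (Kernel.aemeasurable _) (hg.indicator hB).aemeasurable,
    Measure.bind_apply hB (Kernel.aemeasurable _)]
  refine lintegral_congr fun s => ?_
  rw [densityKernel, Kernel.lintegral_withDensity _ hw _ (hg.indicator hB),
    densityKernel_apply (hw.mul (hg.comp measurable_snd)), Kernel.const_apply,
    ← lintegral_indicator hB]
  simp only [indicator_mul_right]

lemma comp_densityKernel_apply_univ (hw : Measurable (Function.uncurry w)) (η : Kernel Y Z)
    (s : X) :
    (η ∘ₖ densityKernel lam w) s univ = densityKernel lam (fun s t => w s t * η t univ) s univ := by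
  rw [Kernel.comp_apply' _ _ _ .univ, densityKernel,
    Kernel.lintegral_withDensity _ hw _ (η.measurable_coe .univ),
    densityKernel_apply (hw.mul ((η.measurable_coe .univ).comp measurable_snd)),
    Kernel.const_apply, Measure.restrict_univ]

theorem supDiff_withDensity_comp_densityKernel_le (hw : Measurable (Function.uncurry w))
    [IsFiniteKernel (densityKernel lam w)] {κ : ℝ} (hκ : 1 ≤ κ)
    (hcross : CrossRatioLE (.ofReal (κ ^ 2)) w) (η : Kernel Y Z) [IsFiniteKernel η]
    {μ ν : Measure X} [IsFiniteMeasure μ] [IsFiniteMeasure ν]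
    (hμν : ((η ∘ₖ densityKernel lam w) ∘ₘ μ) univ = ((η ∘ₖ densityKernel lam w) ∘ₘ ν) univ) :
    supDiff ((densityKernel lam w ∘ₘ μ).withDensity fun t => η t univ)
        ((densityKernel lam w ∘ₘ ν).withDensity fun t => η t univ) ≤
      .ofReal ((κ - 1) / (κ + 1)) *
        supDiff (μ.withDensity fun s => (η ∘ₖ densityKernel lam w) s univ)
          (ν.withDensity fun s => (η ∘ₖ densityKernel lam w) s univ) := by
  have hη := η.measurable_coe MeasurableSet.univ
  set W := densityKernel lam fun s t => w s t * η t univ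
  have hW_univ (s : X) : W s univ = (η ∘ₖ densityKernel lam w) s univ :=
    (comp_densityKernel_apply_univ hw η s).symm
  have : IsFiniteKernel W := ⟨_, Kernel.bound_lt_top (η ∘ₖ densityKernel lam w),
    fun s => (hW_univ s).trans_le (Kernel.measure_le_bound _ s univ)⟩
  have hmass (ρ : Measure X) : (W ∘ₘ ρ) univ = ((η ∘ₖ densityKernel lam w) ∘ₘ ρ) univ := by
    simp only [Measure.bind_apply .univ (Kernel.aemeasurable _), hW_univ]
  rw [withDensity_densityKernel_comp hw hη, withDensity_densityKernel_comp hw hη]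
  simpa only [hW_univ] using supDiff_comp_le_supDiff_withDensity W hκ
    ((hcross.mul_right _).densityKernel ENNReal.ofReal_ne_top (hw.mul (hη.comp measurable_snd)))
    (by rw [hmass, hmass, hμν])

end DensityKernel

section Chain

variable {S : Type*} [MeasurableSpace S] {lam : Measure S} [SFinite lam]

variable (lam) in
noncomputable def chainKernel : List (S → S → ℝ≥0) → Kernel S S
  | [] => Kernel.id
  | k :: ks => chainKernel ks ∘ₖ densityKernel lam fun s t => k s t

lemma chainKernel_apply {ks : List (S → S → ℝ≥0)}
    (hks : ∀ k ∈ ks, Measurable (Function.uncurry fun s t => (k s t : ℝ≥0∞))) (s : S)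
    {E : Set S} (hE : MeasurableSet E) : chainKernel lam ks s E = compKer lam ks s E := by
  induction ks generalizing s with
  | nil => rw [chainKernel, Kernel.id_apply, Measure.dirac_apply' s hE]; rfl
  | cons k ks ih =>
    have ih' := ih fun k' hk' => hks k' (List.mem_cons_of_mem k hk')
    rw [chainKernel, Kernel.comp_apply' _ _ _ hE, densityKernel,
      Kernel.lintegral_withDensity _ (hks k List.mem_cons_self) _
        ((chainKernel lam ks).measurable_coe hE), Kernel.const_apply]
    simp only [ih', compKer]

lemma lintegral_compKer_eq_chainKernel_comp {ks : List (S → S → ℝ≥0)}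
    (hks : ∀ k ∈ ks, Measurable (Function.uncurry fun s t => (k s t : ℝ≥0∞)))
    {E : Set S} (hE : MeasurableSet E) (ρ : Measure S) :
    ∫⁻ s, compKer lam ks s E ∂ρ = (chainKernel lam ks ∘ₘ ρ) E := by
  rw [Measure.bind_apply hE (Kernel.aemeasurable _)]
  exact lintegral_congr fun s => (chainKernel_apply hks s hE).symm

lemma chainKernel_comp_apply_univ_ne_zero {ks : List (S → S → ℝ≥0)}
    (hks : ∀ k ∈ ks, Measurable (Function.uncurry fun s t => (k s t : ℝ≥0∞))) {F : Set S}
    (hpos : ∀ s ∈ F, 0 < compKer lam ks s univ) {ρ : Measure S} (hρ : 0 < ρ F) :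
    (chainKernel lam ks ∘ₘ ρ) univ ≠ 0 := by
  rw [Measure.bind_apply .univ (Kernel.aemeasurable _), ← pos_iff_ne_zero,
    lintegral_pos_iff_support ((chainKernel lam ks).measurable_coe .univ)]
  refine hρ.trans_le (measure_mono fun s hs => ?_)
  rw [Function.mem_support, chainKernel_apply hks s .univ]
  exact (hpos s hs).ne'

lemma isFiniteKernel_chainKernel {ks : List (S → S → ℝ≥0)}
    (hks : ∀ k ∈ ks, IsFiniteKernel (densityKernel lam fun s t => (k s t : ℝ≥0∞))) :
    IsFiniteKernel (chainKernel lam ks) := by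
  induction ks with
  | nil => rw [chainKernel]; infer_instance
  | cons k ks ih =>
    have := hks k List.mem_cons_self
    have := ih fun k' hk' => hks k' (List.mem_cons_of_mem k hk')
    rw [chainKernel]; infer_instance

theorem supDiff_chainKernel_comp_le {n : ℕ} (k : Fin n → S → S → ℝ≥0)
    (hk : ∀ m, Measurable (Function.uncurry fun s t => (k m s t : ℝ≥0∞)))
    [hkf : ∀ m, IsFiniteKernel (densityKernel lam fun s t => (k m s t : ℝ≥0∞))]
    {κ : Fin n → ℝ} (hκ : ∀ m, 1 ≤ κ m)
    (hcross : ∀ m, CrossRatioLE (.ofReal (κ m ^ 2)) fun s t => (k m s t : ℝ≥0∞))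
    {μ ν : Measure S} [IsFiniteMeasure μ] [IsFiniteMeasure ν]
    (hμν : (chainKernel lam (List.ofFn k) ∘ₘ μ) univ = (chainKernel lam (List.ofFn k) ∘ₘ ν) univ) :
    supDiff (chainKernel lam (List.ofFn k) ∘ₘ μ) (chainKernel lam (List.ofFn k) ∘ₘ ν) ≤
      .ofReal (∏ m, (κ m - 1) / (κ m + 1)) *
        supDiff (μ.withDensity fun s => chainKernel lam (List.ofFn k) s univ)
          (ν.withDensity fun s => chainKernel lam (List.ofFn k) s univ) := by
  induction n generalizing μ ν with
  | zero =>
    simp only [List.ofFn_zero, chainKernel, Measure.id_comp, Kernel.id_apply, measure_univ,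
      Finset.univ_eq_empty, Finset.prod_empty, ENNReal.ofReal_one, one_mul, withDensity_const,
      one_smul, le_rfl]
  | succ n ih =>
    have hβ : 0 ≤ (κ 0 - 1) / (κ 0 + 1) := div_nonneg (by linarith [hκ 0]) (by linarith [hκ 0])
    have := isFiniteKernel_chainKernel (lam := lam) (ks := List.ofFn fun m => k m.succ)
      (by simp only [List.forall_mem_ofFn_iff]; exact fun m => hkf m.succ)
    rw [List.ofFn_succ, chainKernel] at hμν ⊢
    rw [← Measure.comp_assoc, ← Measure.comp_assoc]
    refine (ih (fun m => k m.succ) (fun m => hk m.succ) (fun m => hκ m.succ)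
      (fun m => hcross m.succ) (by rwa [Measure.comp_assoc, Measure.comp_assoc])).trans ?_
    rw [Fin.prod_univ_succ, mul_comm ((κ 0 - 1) / (κ 0 + 1)), ENNReal.ofReal_mul' hβ, mul_assoc]
    gcongr
    exact supDiff_withDensity_comp_densityKernel_le (hk 0) (hκ 0) (hcross 0) _ hμν

theorem chainKernel_comp_div_sub_div_le {n : ℕ} (k : Fin n → S → S → ℝ≥0)
    (hk : ∀ m, Measurable (Function.uncurry fun s t => (k m s t : ℝ≥0∞)))
    [hkf : ∀ m, IsFiniteKernel (densityKernel lam fun s t => (k m s t : ℝ≥0∞))]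
    {κ : Fin n → ℝ} (hκ : ∀ m, 1 ≤ κ m)
    (hcross : ∀ m, CrossRatioLE (.ofReal (κ m ^ 2)) fun s t => (k m s t : ℝ≥0∞))
    {μ ν : Measure S} [IsFiniteMeasure μ] [IsFiniteMeasure ν]
    (hμ : (chainKernel lam (List.ofFn k) ∘ₘ μ) univ ≠ 0)
    (hν : (chainKernel lam (List.ofFn k) ∘ₘ ν) univ ≠ 0) {E : Set S} (hE : MeasurableSet E) :
    (chainKernel lam (List.ofFn k) ∘ₘ μ) E / (chainKernel lam (List.ofFn k) ∘ₘ μ) univ -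
        (chainKernel lam (List.ofFn k) ∘ₘ ν) E / (chainKernel lam (List.ofFn k) ∘ₘ ν) univ ≤
      .ofReal (∏ m, (κ m - 1) / (κ m + 1)) := by
  set C := chainKernel lam (List.ofFn k)
  have : IsFiniteKernel C := isFiniteKernel_chainKernel (by
    simp only [List.forall_mem_ofFn_iff]; exact hkf)
  have hnormalize {ρ : Measure S} [IsFiniteMeasure ρ] (hρ : (C ∘ₘ ρ) univ ≠ 0) :
      IsFiniteMeasure (((C ∘ₘ ρ) univ)⁻¹ • ρ) ∧ (C ∘ₘ (((C ∘ₘ ρ) univ)⁻¹ • ρ)) univ = 1 ∧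
        (C ∘ₘ ρ) E / (C ∘ₘ ρ) univ = (C ∘ₘ (((C ∘ₘ ρ) univ)⁻¹ • ρ)) E := by
    refine ⟨ρ.smul_finite (ENNReal.inv_ne_top.mpr hρ), ?_, ?_⟩ <;>
      rw [Measure.comp_smul, Measure.smul_apply, smul_eq_mul]
    · exact ENNReal.inv_mul_cancel hρ (measure_ne_top _ _)
    · exact ENNReal.div_eq_inv_mul
  obtain ⟨_, hμ1, hμE⟩ := hnormalize hμ
  obtain ⟨_, hν1, hνE⟩ := hnormalize hν
  rw [hμE, hνE]
  calc _ ≤ supDiff (C ∘ₘ (((C ∘ₘ μ) univ)⁻¹ • μ)) (C ∘ₘ (((C ∘ₘ ν) univ)⁻¹ • ν)) :=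
        le_supDiff hE
    _ ≤ _ := supDiff_chainKernel_comp_le k hk hκ hcross (hμ1.trans hν1.symm)
    _ ≤ .ofReal (∏ m, (κ m - 1) / (κ m + 1)) * 1 := by
        gcongr
        exact (supDiff_le_measure_univ _ _).trans_eq
          ((withDensity_apply_univ_eq_comp _ _).trans hμ1)
    _ = _ := mul_one _

end Chain

theorem stmt_13_general {S : Type*} [MeasurableSpace S]
    (lam : Measure S) [SigmaFinite lam]
    (n : ℕ) (hn : 0 < n)
    (k : Fin n → S → S → ℝ≥0)
    (hkm : ∀ m, Measurable fun p : S × S => k m p.1 p.2)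
    (hkb : ∀ m, ∃ C : ℝ≥0∞, C < ⊤ ∧ ∀ s, ∫⁻ t, (k m s t : ℝ≥0∞) ∂lam ≤ C)
    (F G : Fin n → Set S)
    (hsupp : ∀ m, (∀ s ∈ F m, ∀ t ∈ G m, 0 < k m s t) ∧
      ∀ s t, (s, t) ∉ (F m) ×ˢ (G m) → k m s t = 0)
    (κ : Fin n → ℝ) (hκ : ∀ m, 1 ≤ κ m)
    (hcross : ∀ m, ∀ s₁ ∈ F m, ∀ s₂ ∈ F m, ∀ t₁ ∈ G m, ∀ t₂ ∈ G m,
      (k m s₁ t₁ : ℝ) * (k m s₂ t₂ : ℝ) ≤ (κ m) ^ 2 * ((k m s₂ t₁ : ℝ) * (k m s₁ t₂ : ℝ)))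
    (hKpos : ∀ s ∈ F ⟨0, hn⟩, 0 < compKer lam (List.ofFn k) s Set.univ)
    (x y : Measure S) (hxf : IsFiniteMeasure x) (hyf : IsFiniteMeasure y)
    (hx : 0 < x (F ⟨0, hn⟩)) (hy : 0 < y (F ⟨0, hn⟩)) :
    sSup {d : ℝ | ∃ E : Set S, MeasurableSet E ∧
        d = ((∫⁻ s, compKer lam (List.ofFn k) s E ∂x) /
              (∫⁻ s, compKer lam (List.ofFn k) s Set.univ ∂x)).toReal -
            ((∫⁻ s, compKer lam (List.ofFn k) s E ∂y) /
              (∫⁻ s, compKer lam (List.ofFn k) s Set.univ ∂y)).toReal} +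
      sSup {d : ℝ | ∃ E : Set S, MeasurableSet E ∧
        d = ((∫⁻ s, compKer lam (List.ofFn k) s E ∂y) /
              (∫⁻ s, compKer lam (List.ofFn k) s Set.univ ∂y)).toReal -
            ((∫⁻ s, compKer lam (List.ofFn k) s E ∂x) /
              (∫⁻ s, compKer lam (List.ofFn k) s Set.univ ∂x)).toReal} ≤
      2 * ∏ m, (κ m - 1) / (κ m + 1) := by
  have hk m : Measurable (Function.uncurry fun s t => (k m s t : ℝ≥0∞)) :=
    measurable_coe_nnreal_ennreal.comp (hkm m)
  have hks : ∀ k' ∈ List.ofFn k, Measurable (Function.uncurry fun s t => (k' s t : ℝ≥0∞)) := by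
    simpa only [List.forall_mem_ofFn_iff] using hk
  have hkf m := isFiniteKernel_densityKernel (lam := lam) (hk m) (hkb m)
  have hC {E : Set S} (hE : MeasurableSet E) :=
    lintegral_compKer_eq_chainKernel_comp (lam := lam) hks hE
  have hbound {ρ ρ' : Measure S} [IsFiniteMeasure ρ] [IsFiniteMeasure ρ']
      (hρ : 0 < ρ (F ⟨0, hn⟩)) (hρ' : 0 < ρ' (F ⟨0, hn⟩)) {E : Set S} (hE : MeasurableSet E) :
      (∫⁻ s, compKer lam (List.ofFn k) s E ∂ρ) / (∫⁻ s, compKer lam (List.ofFn k) s univ ∂ρ) -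
        (∫⁻ s, compKer lam (List.ofFn k) s E ∂ρ') / (∫⁻ s, compKer lam (List.ofFn k) s univ ∂ρ')
        ≤ .ofReal (∏ m, (κ m - 1) / (κ m + 1)) := by
    rw [hC hE, hC hE, hC .univ, hC .univ]
    exact chainKernel_comp_div_sub_div_le k hk hκ
      (fun m => crossRatioLE_of_support_subset_prod (hsupp m).2 (hcross m))
      (chainKernel_comp_apply_univ_ne_zero hks hKpos hρ)
      (chainKernel_comp_apply_univ_ne_zero hks hKpos hρ') hE
  have hfin (ρ : Measure S) {E : Set S} (hE : MeasurableSet E) :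
      (∫⁻ s, compKer lam (List.ofFn k) s E ∂ρ) / (∫⁻ s, compKer lam (List.ofFn k) s univ ∂ρ)
        ≠ ∞ := by
    rw [hC hE, hC .univ]
    exact measure_div_measure_univ_ne_top _ E
  have hβ : 0 ≤ ∏ m, (κ m - 1) / (κ m + 1) :=
    Finset.prod_nonneg fun m _ => div_nonneg (by linarith [hκ m]) (by linarith [hκ m])
  calc _ ≤ (∏ m, (κ m - 1) / (κ m + 1)) + ∏ m, (κ m - 1) / (κ m + 1) :=
        add_le_add (sSup_toReal_sub_le hβ (fun E => hfin y) fun E => hbound hx hy)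
          (sSup_toReal_sub_le hβ (fun E => hfin x) fun E => hbound hy hx)
    _ = _ := by ring

/-- For density kernels `k₁, …, k_n` with rectangular supports `F_m × G_m`
and cross-ratio bounds `κ_m²`, if `Kⁿ(s,S) > 0` on `F₁`, then for all finite nonnegative
measures `x, y` with `x(F₁) > 0` and `y(F₁) > 0`,
`δ_TV(xKⁿ/‖xKⁿ‖, yKⁿ/‖yKⁿ‖) ≤ 2 ∏_m (κ_m−1)/(κ_m+1)`, where
`xKⁿ(E) = ∫ Kⁿ(s,E) x(ds)` and `δ_TV` is written out as
`sup_E(difference) + sup_E(opposite difference)` over measurable `E`. -/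
theorem stmt_13 {S : Type*} [MetricSpace S] [CompleteSpace S]
    [TopologicalSpace.SeparableSpace S] [MeasurableSpace S] [BorelSpace S]
    (lam : Measure S) [SigmaFinite lam]
    (n : ℕ) (hn : 0 < n)
    (k : Fin n → S → S → ℝ≥0)
    (hkm : ∀ m, Measurable fun p : S × S => k m p.1 p.2)
    (hkb : ∀ m, ∃ C : ℝ≥0∞, C < ⊤ ∧ ∀ s, ∫⁻ t, (k m s t : ℝ≥0∞) ∂lam ≤ C)
    (F G : Fin n → Set S)
    (hFm : ∀ m, MeasurableSet (F m)) (hGm : ∀ m, MeasurableSet (G m))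
    (hFpos : ∀ m, 0 < lam (F m)) (hGpos : ∀ m, 0 < lam (G m))
    (hsupp : ∀ m, (∀ s ∈ F m, ∀ t ∈ G m, 0 < k m s t) ∧
      ∀ s t, (s, t) ∉ (F m) ×ˢ (G m) → k m s t = 0)
    (κ : Fin n → ℝ) (hκ : ∀ m, 1 ≤ κ m)
    (hcross : ∀ m, ∀ s₁ ∈ F m, ∀ s₂ ∈ F m, ∀ t₁ ∈ G m, ∀ t₂ ∈ G m,
      (k m s₁ t₁ : ℝ) * (k m s₂ t₂ : ℝ) ≤ (κ m) ^ 2 * ((k m s₂ t₁ : ℝ) * (k m s₁ t₂ : ℝ)))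
    (hKpos : ∀ s ∈ F ⟨0, hn⟩, 0 < compKer lam (List.ofFn k) s Set.univ)
    (x y : Measure S) (hxf : IsFiniteMeasure x) (hyf : IsFiniteMeasure y)
    (hx : 0 < x (F ⟨0, hn⟩)) (hy : 0 < y (F ⟨0, hn⟩)) :
    sSup {d : ℝ | ∃ E : Set S, MeasurableSet E ∧
        d = ((∫⁻ s, compKer lam (List.ofFn k) s E ∂x) /
              (∫⁻ s, compKer lam (List.ofFn k) s Set.univ ∂x)).toReal -
            ((∫⁻ s, compKer lam (List.ofFn k) s E ∂y) /
              (∫⁻ s, compKer lam (List.ofFn k) s Set.univ ∂y)).toReal} +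
      sSup {d : ℝ | ∃ E : Set S, MeasurableSet E ∧
        d = ((∫⁻ s, compKer lam (List.ofFn k) s E ∂y) /
              (∫⁻ s, compKer lam (List.ofFn k) s Set.univ ∂y)).toReal -
            ((∫⁻ s, compKer lam (List.ofFn k) s E ∂x) /
              (∫⁻ s, compKer lam (List.ofFn k) s Set.univ ∂x)).toReal} ≤
      2 * ∏ m, (κ m - 1) / (κ m + 1) :=
  stmt_13_general lam n hn k hkm hkb F G hsupp κ hκ hcross hKpos x y hxf hyf hx hy
end

section
/- Let u : K → ℝ be bounded with sup norm ‖u‖ and Lipschitz with respect to δ_TV with Lipschitz constant γ(u), and suppose that for every x ∈ K the function a ↦ u(h(x,a))·‖xM_a‖ is τ-measurable and τ-integrable. Define Tu(x) = ∫_A u(h(x,a)) ‖xM_a‖ τ(da). Then for all x, y ∈ K, |Tu(x) − Tu(y)| ≤ (‖u‖ + 2γ(u)) · δ_TV(x, y). -/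
open MeasureTheory
open scoped NNReal ENNReal

/-- The total variation distance between two (finite) measures:
`δ_TV(z₁,z₂) = sup_F (z₁(F) − z₂(F)) + sup_F (z₂(F) − z₁(F))`, `F` measurable. -/
noncomputable def tvDist {S : Type*} [MeasurableSpace S] (z₁ z₂ : Measure S) : ℝ :=
  sSup {d : ℝ | ∃ F : Set S, MeasurableSet F ∧ d = (z₁ F).toReal - (z₂ F).toReal} +
    sSup {d : ℝ | ∃ F : Set S, MeasurableSet F ∧ d = (z₂ F).toReal - (z₁ F).toReal}

/-- The measure `xM_a`, `xM_a(F) = ∫_S ∫_F m(s,t,a) λ(dt) x(ds)`. -/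
noncomputable def xMa {S A : Type*} [MeasurableSpace S] [MeasurableSpace A]
    (lam : Measure S) (m : S → S → A → ℝ≥0) (x : Measure S) (a : A) : Measure S :=
  x.bind fun s => lam.withDensity fun t => (m s t a : ℝ≥0∞)

/-- The map `h(x,a) = xM_a/‖xM_a‖` if `‖xM_a‖ > 0`, and `h(x,a) = x` otherwise. -/
noncomputable def hmap {S A : Type*} [MeasurableSpace S] [MeasurableSpace A]
    (lam : Measure S) (m : S → S → A → ℝ≥0) (x : Measure S) (a : A) : Measure S :=
  if 0 < xMa lam m x a Set.univ then (xMa lam m x a Set.univ)⁻¹ • xMa lam m x a else x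

/-!
For each `a`, write `α = ‖xM_a‖` and `β = ‖yM_a‖`. Then
`u(h(x,a)) α - u(h(y,a)) β = u(h(x,a)) (α - β) + (u(h(x,a)) - u(h(y,a))) β`,
and both `|α - β|` and `β δ_TV(h(x,a), h(y,a)) / 2` are at most `δ_TV(xM_a, yM_a)`.
Since `x ≤ (x - y) + y` and `x ↦ xM_a` is monotone and additive,
`δ_TV(xM_a, yM_a) ≤ ‖(x - y)M_a‖ + ‖(y - x)M_a‖`. The kernel conserves mass once integrated
over `a`, so the right side integrates to `‖x - y‖ + ‖y - x‖`, which is `δ_TV(x, y)` by the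
Hahn decomposition.
-/

open Set

section TotalVariation

variable {S : Type*} [MeasurableSpace S] {μ ν ρ σ : Measure S}

noncomputable def tvExcess (μ ν : Measure S) : ℝ :=
  sSup {d : ℝ | ∃ F : Set S, MeasurableSet F ∧ d = (μ F).toReal - (ν F).toReal}

lemma tvDist_eq_tvExcess_add_tvExcess (μ ν : Measure S) :
    tvDist μ ν = tvExcess μ ν + tvExcess ν μ := rfl

lemma tvExcess_nonneg (μ ν : Measure S) : 0 ≤ tvExcess μ ν :=
  Real.sSup_nonneg' ⟨0, ⟨∅, .empty, by simp⟩, le_rfl⟩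

lemma tvDist_nonneg (μ ν : Measure S) : 0 ≤ tvDist μ ν :=
  add_nonneg (tvExcess_nonneg μ ν) (tvExcess_nonneg ν μ)

lemma tvExcess_le {c : ℝ} (h : ∀ F, MeasurableSet F → (μ F).toReal - (ν F).toReal ≤ c) :
    tvExcess μ ν ≤ c :=
  csSup_le ⟨0, ∅, .empty, by simp⟩ (by rintro _ ⟨F, hF, rfl⟩; exact h F hF)

lemma sub_le_tvExcess [IsFiniteMeasure μ] {F : Set S} (hF : MeasurableSet F) :
    (μ F).toReal - (ν F).toReal ≤ tvExcess μ ν := by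
  refine le_csSup ⟨(μ univ).toReal, ?_⟩ ⟨F, hF, rfl⟩
  rintro _ ⟨G, -, rfl⟩
  have := ENNReal.toReal_mono (measure_ne_top μ univ) (measure_mono (subset_univ G))
  linarith [ENNReal.toReal_nonneg (a := ν G)]

lemma tvExcess_le_of_le_add [IsFiniteMeasure ρ] [IsFiniteMeasure ν] (h : μ ≤ ρ + ν) :
    tvExcess μ ν ≤ (ρ univ).toReal := by
  refine tvExcess_le fun F hF => ?_
  have hF : μ F ≤ ρ univ + ν F :=
    (h F).trans (add_le_add_left (measure_mono (subset_univ F)) _)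
  have := ENNReal.toReal_mono (by finiteness) hF
  rw [ENNReal.toReal_add (measure_ne_top _ _) (measure_ne_top _ _)] at this
  linarith

lemma tvExcess_eq_toReal_sub_apply_univ [IsFiniteMeasure μ] [IsFiniteMeasure ν] :
    tvExcess μ ν = ((μ - ν) univ).toReal := by
  refine le_antisymm (tvExcess_le_of_le_add (Measure.sub_le_iff_le_add.1 le_rfl)) ?_
  obtain ⟨s, hs⟩ := exists_isHahnDecomposition μ ν
  have hle : ν sᶜ ≤ μ sᶜ := by simpa using hs.ge_on_compl univ
  have : (μ - ν) univ = μ sᶜ - ν sᶜ := by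
    rw [← measure_add_measure_compl hs.measurableSet,
      Measure.sub_apply_eq_zero_of_isHahnDecomposition hs, zero_add,
      ← Measure.restrict_apply_univ,
      Measure.restrict_sub_eq_restrict_sub_restrict hs.measurableSet.compl,
      Measure.sub_apply .univ hs.ge_on_compl, Measure.restrict_apply_univ,
      Measure.restrict_apply_univ]
  rw [this, ENNReal.toReal_sub_of_le hle (measure_ne_top _ _)]
  exact sub_le_tvExcess hs.measurableSet.compl

lemma tvDist_eq_toReal_sub_apply_univ [IsFiniteMeasure μ] [IsFiniteMeasure ν] :
    tvDist μ ν = ((μ - ν) univ).toReal + ((ν - μ) univ).toReal := by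
  rw [tvDist_eq_tvExcess_add_tvExcess, tvExcess_eq_toReal_sub_apply_univ,
    tvExcess_eq_toReal_sub_apply_univ]

lemma tvDist_le_of_le_add [IsFiniteMeasure μ] [IsFiniteMeasure ν] [IsFiniteMeasure ρ]
    [IsFiniteMeasure σ] (hμ : μ ≤ ρ + ν) (hν : ν ≤ σ + μ) :
    tvDist μ ν ≤ (ρ univ).toReal + (σ univ).toReal :=
  add_le_add (tvExcess_le_of_le_add hμ) (tvExcess_le_of_le_add hν)

lemma abs_toReal_univ_sub_le_tvDist [IsFiniteMeasure μ] [IsFiniteMeasure ν] :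
    |(μ univ).toReal - (ν univ).toReal| ≤ tvDist μ ν :=
  abs_sub_le_iff.2
    ⟨(sub_le_tvExcess .univ).trans (le_add_of_nonneg_right (tvExcess_nonneg ν μ)),
      (sub_le_tvExcess .univ).trans (le_add_of_nonneg_left (tvExcess_nonneg μ ν))⟩

lemma mul_tvExcess_normalize_le [IsFiniteMeasure μ] [IsFiniteMeasure ν]
    (hμ : μ univ ≠ 0) (hν : ν univ ≠ 0) {c : ℝ} (hc : 0 < c) :
    c * tvExcess ((μ univ)⁻¹ • μ) ((ν univ)⁻¹ • ν) ≤
      tvExcess μ ν + max (c - (μ univ).toReal) 0 + max ((ν univ).toReal - c) 0 := by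
  rw [← le_div_iff₀' hc]
  refine tvExcess_le fun F hF => ?_
  rw [le_div_iff₀' hc]
  have hsub := sub_le_tvExcess (μ := μ) (ν := ν) hF
  have hμF := ENNReal.toReal_mono (measure_ne_top μ univ) (measure_mono (subset_univ F))
  have hνF := ENNReal.toReal_mono (measure_ne_top ν univ) (measure_mono (subset_univ F))
  simp only [Measure.smul_apply, smul_eq_mul, ENNReal.toReal_mul, ENNReal.toReal_inv]
  set α := (μ univ).toReal
  set β := (ν univ).toReal
  have hα : 0 < α := ENNReal.toReal_pos hμ (measure_ne_top _ _)
  have hβ : 0 < β := ENNReal.toReal_pos hν (measure_ne_top _ _)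
  set p := α⁻¹ * (μ F).toReal
  set q := β⁻¹ * (ν F).toReal
  have hp : (μ F).toReal = α * p := (mul_inv_cancel_left₀ hα.ne' _).symm
  have hq : (ν F).toReal = β * q := (mul_inv_cancel_left₀ hβ.ne' _).symm
  have hp_le : (c - α) * p ≤ max (c - α) 0 :=
    (mul_le_mul_of_nonneg_right (le_max_left _ _) (by positivity)).trans
      (mul_le_of_le_one_right (le_max_right _ _) (by rw [inv_mul_le_iff₀ hα]; simpa using hμF))
  have hq_le : (β - c) * q ≤ max (β - c) 0 :=
    (mul_le_mul_of_nonneg_right (le_max_left _ _) (by positivity)).trans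
      (mul_le_of_le_one_right (le_max_right _ _) (by rw [inv_mul_le_iff₀ hβ]; simpa using hνF))
  rw [hp, hq] at hsub
  -- `c (p - q) = (α p - β q) + (c - α) p + (β - c) q`
  linarith

lemma toReal_univ_mul_tvDist_normalize_le [IsFiniteMeasure μ] [IsFiniteMeasure ν]
    (hμ : μ univ ≠ 0) (hν : ν univ ≠ 0) :
    (ν univ).toReal * tvDist ((μ univ)⁻¹ • μ) ((ν univ)⁻¹ • ν) ≤ 2 * tvDist μ ν := by
  have hβ : 0 < (ν univ).toReal := ENNReal.toReal_pos hν (measure_ne_top _ _)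
  have h₁ := mul_tvExcess_normalize_le hμ hν hβ
  have h₂ := mul_tvExcess_normalize_le hν hμ hβ
  have hmass := abs_toReal_univ_sub_le_tvDist (μ := μ) (ν := ν)
  simp only [sub_self, max_self, add_zero, tvDist_eq_tvExcess_add_tvExcess] at h₁ h₂ hmass ⊢
  have habs := max_zero_add_max_neg_zero_eq_abs_self ((ν univ).toReal - (μ univ).toReal)
  rw [neg_sub, abs_sub_comm] at habs
  rw [mul_add]
  linarith

end TotalVariation

section Normalization

variable {S : Type*} [MeasurableSpace S] {lam x μ : Measure S}

lemma isProbabilityMeasure_ite_normalize [IsFiniteMeasure μ] (hμ : μ ≪ lam)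
    (hx : IsProbabilityMeasure x) (hxl : x ≪ lam) :
    IsProbabilityMeasure (if 0 < μ univ then (μ univ)⁻¹ • μ else x) ∧
      (if 0 < μ univ then (μ univ)⁻¹ • μ else x) ≪ lam := by
  split_ifs with h
  · have : NeZero μ := ⟨fun h0 => by simp [h0] at h⟩
    exact ⟨inferInstance, hμ.smul_left _⟩
  · exact ⟨hx, hxl⟩

lemma abs_mul_toReal_univ_sub_le_tvDist {u : Measure S → ℝ} {Cu γu : ℝ} (hγu : 0 ≤ γu)
    (hbd : ∀ z : Measure S, IsProbabilityMeasure z → z ≪ lam → |u z| ≤ Cu)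
    (hlip : ∀ z₁ z₂ : Measure S, IsProbabilityMeasure z₁ → z₁ ≪ lam →
      IsProbabilityMeasure z₂ → z₂ ≪ lam → |u z₁ - u z₂| ≤ γu * tvDist z₁ z₂)
    {y ν : Measure S} (hx : IsProbabilityMeasure x) (hxl : x ≪ lam)
    (hy : IsProbabilityMeasure y) (hyl : y ≪ lam)
    [IsFiniteMeasure μ] [IsFiniteMeasure ν] (hμ : μ ≪ lam) (hν : ν ≪ lam) :
    |u (if 0 < μ univ then (μ univ)⁻¹ • μ else x) * (μ univ).toReal -
        u (if 0 < ν univ then (ν univ)⁻¹ • ν else y) * (ν univ).toReal| ≤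
      (Cu + 2 * γu) * tvDist μ ν := by
  set zμ := if 0 < μ univ then (μ univ)⁻¹ • μ else x
  set zν := if 0 < ν univ then (ν univ)⁻¹ • ν else y
  obtain ⟨hzμp, hzμl⟩ := isProbabilityMeasure_ite_normalize hμ hx hxl
  obtain ⟨hzνp, hzνl⟩ := isProbabilityMeasure_ite_normalize hν hy hyl
  have hCμ := hbd zμ hzμp hzμl
  have hCν := hbd zν hzνp hzνl
  have hmass := abs_toReal_univ_sub_le_tvDist (μ := μ) (ν := ν)
  have htv := tvDist_nonneg μ ν
  have hCpos : 0 ≤ Cu := (abs_nonneg _).trans hCμ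
  by_cases hμ0 : μ univ = 0
  · have hβ : (ν univ).toReal ≤ tvDist μ ν := by simpa [hμ0] using hmass
    calc |u zμ * (μ univ).toReal - u zν * (ν univ).toReal| = |u zν| * (ν univ).toReal := by
          simp [hμ0, abs_mul]
      _ ≤ Cu * tvDist μ ν := mul_le_mul hCν hβ ENNReal.toReal_nonneg hCpos
      _ ≤ (Cu + 2 * γu) * tvDist μ ν := by nlinarith
  by_cases hν0 : ν univ = 0
  · have hα : (μ univ).toReal ≤ tvDist μ ν := by simpa [hν0] using hmass
    calc |u zμ * (μ univ).toReal - u zν * (ν univ).toReal| = |u zμ| * (μ univ).toReal := by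
          simp [hν0, abs_mul]
      _ ≤ Cu * tvDist μ ν := mul_le_mul hCμ hα ENNReal.toReal_nonneg hCpos
      _ ≤ (Cu + 2 * γu) * tvDist μ ν := by nlinarith
  have hnormalize := toReal_univ_mul_tvDist_normalize_le hμ0 hν0
  have hzμ' : zμ = (μ univ)⁻¹ • μ := if_pos (pos_iff_ne_zero.2 hμ0)
  have hzν' : zν = (ν univ)⁻¹ • ν := if_pos (pos_iff_ne_zero.2 hν0)
  rw [← hzμ', ← hzν'] at hnormalize
  have hlip' := hlip zμ zν hzμp hzμl hzνp hzνl
  calc |u zμ * (μ univ).toReal - u zν * (ν univ).toReal|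
      = |u zμ * ((μ univ).toReal - (ν univ).toReal) + (u zμ - u zν) * (ν univ).toReal| := by
        ring_nf
    _ ≤ |u zμ| * |(μ univ).toReal - (ν univ).toReal| + |u zμ - u zν| * (ν univ).toReal := by
        exact (abs_add_le _ _).trans_eq (by rw [abs_mul, abs_mul, ENNReal.abs_toReal])
    _ ≤ Cu * tvDist μ ν + γu * tvDist zμ zν * (ν univ).toReal := by
        gcongr
    _ ≤ Cu * tvDist μ ν + γu * (2 * tvDist μ ν) := by
        rw [mul_assoc, mul_comm (tvDist zμ zν)]
        gcongr
    _ = (Cu + 2 * γu) * tvDist μ ν := by ring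

end Normalization

section Kernel

variable {S A : Type*} [MeasurableSpace S] [MeasurableSpace A] {lam : Measure S} [SFinite lam]
  {τ : Measure A} [SFinite τ] {m : S → S → A → ℝ≥0}

lemma measurable_withDensity_kernel (hm : Measurable fun p : S × S × A => m p.1 p.2.1 p.2.2)
    (a : A) : Measurable fun s => lam.withDensity fun t => (m s t a : ℝ≥0∞) := by
  refine Measure.measurable_of_measurable_coe _ fun F hF => ?_
  simp_rw [withDensity_apply _ hF]
  exact (hm.comp (f := fun p : S × S => (p.1, p.2, a)) (by fun_prop)).coe_nnreal_ennreal
    |>.lintegral_prod_right'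

lemma measurable_lintegral_kernel (hm : Measurable fun p : S × S × A => m p.1 p.2.1 p.2.2) :
    Measurable fun p : A × S => ∫⁻ t, (m p.2 t p.1 : ℝ≥0∞) ∂lam :=
  (hm.comp (f := fun q : (A × S) × S => (q.1.2, q.2, q.1.1)) (by fun_prop)).coe_nnreal_ennreal
    |>.lintegral_prod_right'

lemma xMa_apply (hm : Measurable fun p : S × S × A => m p.1 p.2.1 p.2.2) (x : Measure S) (a : A)
    {F : Set S} (hF : MeasurableSet F) :
    xMa lam m x a F = ∫⁻ s, ∫⁻ t in F, (m s t a : ℝ≥0∞) ∂lam ∂x := by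
  rw [xMa, Measure.bind_apply hF (measurable_withDensity_kernel hm a).aemeasurable]
  simp_rw [withDensity_apply _ hF]

lemma xMa_absolutelyContinuous (hm : Measurable fun p : S × S × A => m p.1 p.2.1 p.2.2)
    (x : Measure S) (a : A) : xMa lam m x a ≪ lam :=
  Measure.AbsolutelyContinuous.mk fun F hF hF0 => by
    simp [xMa_apply hm x a hF, Measure.restrict_eq_zero.2 hF0]

lemma xMa_le_add {x y ρ : Measure S} (hm : Measurable fun p : S × S × A => m p.1 p.2.1 p.2.2)
    (h : x ≤ ρ + y) (a : A) : xMa lam m x a ≤ xMa lam m ρ a + xMa lam m y a :=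
  Measure.le_iff.2 fun F hF => by
    simp only [Measure.add_apply, xMa_apply hm _ a hF, ← lintegral_add_measure]
    exact lintegral_mono' h le_rfl

lemma measurable_xMa_apply_univ (hm : Measurable fun p : S × S × A => m p.1 p.2.1 p.2.2)
    (x : Measure S) [SFinite x] : Measurable fun a => xMa lam m x a univ := by
  simp_rw [xMa_apply hm x _ .univ, Measure.restrict_univ]
  exact (measurable_lintegral_kernel hm).lintegral_prod_right'

lemma lintegral_xMa_apply_univ (hm : Measurable fun p : S × S × A => m p.1 p.2.1 p.2.2)
    (hnorm : ∀ s : S, ∫⁻ t, ∫⁻ a, (m s t a : ℝ≥0∞) ∂τ ∂lam = 1) (x : Measure S) [SFinite x] :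
    ∫⁻ a, xMa lam m x a univ ∂τ = x univ := by
  simp_rw [xMa_apply hm x _ .univ, Measure.restrict_univ]
  have hmass : ∀ s, ∫⁻ a, ∫⁻ t, (m s t a : ℝ≥0∞) ∂lam ∂τ = 1 := fun s => by
    rw [lintegral_lintegral_swap (hm.comp (f := fun p : A × S => (s, p.2, p.1))
      (by fun_prop)).coe_nnreal_ennreal.aemeasurable, hnorm s]
  rw [lintegral_lintegral_swap (measurable_lintegral_kernel hm).aemeasurable]
  simp_rw [hmass, lintegral_one]

lemma ae_xMa_apply_univ_lt_top (hm : Measurable fun p : S × S × A => m p.1 p.2.1 p.2.2)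
    (hnorm : ∀ s : S, ∫⁻ t, ∫⁻ a, (m s t a : ℝ≥0∞) ∂τ ∂lam = 1) (x : Measure S)
    [IsFiniteMeasure x] : ∀ᵐ a ∂τ, xMa lam m x a univ < ∞ :=
  ae_lt_top (measurable_xMa_apply_univ hm x)
    (by rw [lintegral_xMa_apply_univ hm hnorm x]; exact measure_ne_top x univ)

lemma integrable_toReal_xMa_apply_univ
    (hm : Measurable fun p : S × S × A => m p.1 p.2.1 p.2.2)
    (hnorm : ∀ s : S, ∫⁻ t, ∫⁻ a, (m s t a : ℝ≥0∞) ∂τ ∂lam = 1) (x : Measure S)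
    [IsFiniteMeasure x] : Integrable (fun a => (xMa lam m x a univ).toReal) τ :=
  integrable_toReal_of_lintegral_ne_top (measurable_xMa_apply_univ hm x).aemeasurable
    (by rw [lintegral_xMa_apply_univ hm hnorm x]; exact measure_ne_top x univ)

lemma integral_toReal_xMa_apply_univ
    (hm : Measurable fun p : S × S × A => m p.1 p.2.1 p.2.2)
    (hnorm : ∀ s : S, ∫⁻ t, ∫⁻ a, (m s t a : ℝ≥0∞) ∂τ ∂lam = 1) (x : Measure S)
    [IsFiniteMeasure x] : ∫ a, (xMa lam m x a univ).toReal ∂τ = (x univ).toReal := by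
  rw [integral_toReal (measurable_xMa_apply_univ hm x).aemeasurable
    (ae_xMa_apply_univ_lt_top hm hnorm x), lintegral_xMa_apply_univ hm hnorm x]

lemma exists_integral_eq_tvDist_and_ae_tvDist_xMa_le
    (hm : Measurable fun p : S × S × A => m p.1 p.2.1 p.2.2)
    (hnorm : ∀ s : S, ∫⁻ t, ∫⁻ a, (m s t a : ℝ≥0∞) ∂τ ∂lam = 1)
    (x y : Measure S) [IsFiniteMeasure x] [IsFiniteMeasure y] :
    ∃ W : A → ℝ, Integrable W τ ∧ ∫ a, W a ∂τ = tvDist x y ∧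
      ∀ᵐ a ∂τ, tvDist (xMa lam m x a) (xMa lam m y a) ≤ W a := by
  refine ⟨fun a => (xMa lam m (x - y) a univ).toReal + (xMa lam m (y - x) a univ).toReal,
    (integrable_toReal_xMa_apply_univ hm hnorm _).add
      (integrable_toReal_xMa_apply_univ hm hnorm _), ?_, ?_⟩
  · rw [integral_add (integrable_toReal_xMa_apply_univ hm hnorm _)
      (integrable_toReal_xMa_apply_univ hm hnorm _), integral_toReal_xMa_apply_univ hm hnorm,
      integral_toReal_xMa_apply_univ hm hnorm, tvDist_eq_toReal_sub_apply_univ]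
  · filter_upwards [ae_xMa_apply_univ_lt_top hm hnorm x, ae_xMa_apply_univ_lt_top hm hnorm y,
      ae_xMa_apply_univ_lt_top hm hnorm (x - y), ae_xMa_apply_univ_lt_top hm hnorm (y - x)]
      with a hx hy hxy hyx
    have : IsFiniteMeasure (xMa lam m x a) := ⟨hx⟩
    have : IsFiniteMeasure (xMa lam m y a) := ⟨hy⟩
    have : IsFiniteMeasure (xMa lam m (x - y) a) := ⟨hxy⟩
    have : IsFiniteMeasure (xMa lam m (y - x) a) := ⟨hyx⟩
    exact tvDist_le_of_le_add (xMa_le_add hm (Measure.sub_le_iff_le_add.1 le_rfl) a)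
      (xMa_le_add hm (Measure.sub_le_iff_le_add.1 le_rfl) a)

end Kernel

theorem stmt_14_general {S A : Type*}
    [MeasurableSpace S] [MeasurableSpace A]
    (lam : Measure S) [SigmaFinite lam] (τ : Measure A) [SigmaFinite τ]
    (m : S → S → A → ℝ≥0)
    (hm : Measurable fun p : S × S × A => m p.1 p.2.1 p.2.2)
    (hnorm : ∀ s : S, ∫⁻ t, ∫⁻ a, (m s t a : ℝ≥0∞) ∂τ ∂lam = 1)
    (u : Measure S → ℝ) (Cu γu : ℝ) (hγu : 0 ≤ γu)
    (hbd : ∀ z : Measure S, IsProbabilityMeasure z → z ≪ lam → |u z| ≤ Cu)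
    (hlip : ∀ z₁ z₂ : Measure S, IsProbabilityMeasure z₁ → z₁ ≪ lam →
      IsProbabilityMeasure z₂ → z₂ ≪ lam → |u z₁ - u z₂| ≤ γu * tvDist z₁ z₂)
    (hint : ∀ z : Measure S, IsProbabilityMeasure z → z ≪ lam →
      Integrable (fun a => u (hmap lam m z a) * (xMa lam m z a Set.univ).toReal) τ)
    (x y : Measure S)
    (hx : IsProbabilityMeasure x) (hxl : x ≪ lam)
    (hy : IsProbabilityMeasure y) (hyl : y ≪ lam) :
    |(∫ a, u (hmap lam m x a) * (xMa lam m x a Set.univ).toReal ∂τ) -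
        ∫ a, u (hmap lam m y a) * (xMa lam m y a Set.univ).toReal ∂τ| ≤
      (Cu + 2 * γu) * tvDist x y := by
  obtain ⟨W, hWi, hWint, hW⟩ := exists_integral_eq_tvDist_and_ae_tvDist_xMa_le hm hnorm x y
  have hC : 0 ≤ Cu + 2 * γu := by linarith [(abs_nonneg _).trans (hbd x hx hxl)]
  have hpt : ∀ᵐ a ∂τ, |u (hmap lam m x a) * (xMa lam m x a univ).toReal -
      u (hmap lam m y a) * (xMa lam m y a univ).toReal| ≤ (Cu + 2 * γu) * W a := by
    filter_upwards [hW, ae_xMa_apply_univ_lt_top hm hnorm x,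
      ae_xMa_apply_univ_lt_top hm hnorm y] with a hWa hxa hya
    have : IsFiniteMeasure (xMa lam m x a) := ⟨hxa⟩
    have : IsFiniteMeasure (xMa lam m y a) := ⟨hya⟩
    exact (abs_mul_toReal_univ_sub_le_tvDist hγu hbd hlip hx hxl hy hyl
      (xMa_absolutelyContinuous hm x a) (xMa_absolutelyContinuous hm y a)).trans
      (mul_le_mul_of_nonneg_left hWa hC)
  calc _ = |∫ a, (u (hmap lam m x a) * (xMa lam m x a univ).toReal -
        u (hmap lam m y a) * (xMa lam m y a univ).toReal) ∂τ| := by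
        rw [integral_sub (hint x hx hxl) (hint y hy hyl)]
    _ ≤ ∫ a, |u (hmap lam m x a) * (xMa lam m x a univ).toReal -
        u (hmap lam m y a) * (xMa lam m y a univ).toReal| ∂τ := abs_integral_le_integral_abs
    _ ≤ ∫ a, (Cu + 2 * γu) * W a ∂τ :=
        integral_mono_ae ((hint x hx hxl).sub (hint y hy hyl)).abs (hWi.const_mul _) hpt
    _ = (Cu + 2 * γu) * tvDist x y := by rw [integral_const_mul, hWint]

/-- For a bounded Lipschitz `u : K → ℝ` (bound `Cu`, Lipschitz constant `γu`
with respect to `δ_TV`) whose transition integrand is integrable, the transition operator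
`Tu(x) = ∫_A u(h(x,a)) ‖xM_a‖ τ(da)` satisfies
`|Tu(x) − Tu(y)| ≤ (‖u‖ + 2γ(u)) δ_TV(x,y)` for `x, y ∈ K`. -/
theorem stmt_14 {S A : Type*}
    [MetricSpace S] [CompleteSpace S] [TopologicalSpace.SeparableSpace S]
    [MeasurableSpace S] [BorelSpace S]
    [MetricSpace A] [CompleteSpace A] [TopologicalSpace.SeparableSpace A]
    [MeasurableSpace A] [BorelSpace A]
    (lam : Measure S) [SigmaFinite lam] (τ : Measure A) [SigmaFinite τ]
    (m : S → S → A → ℝ≥0)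
    (hm : Measurable fun p : S × S × A => m p.1 p.2.1 p.2.2)
    (hnorm : ∀ s : S, ∫⁻ t, ∫⁻ a, (m s t a : ℝ≥0∞) ∂τ ∂lam = 1)
    (u : Measure S → ℝ) (Cu γu : ℝ) (hγu : 0 ≤ γu)
    (hbd : ∀ z : Measure S, IsProbabilityMeasure z → z ≪ lam → |u z| ≤ Cu)
    (hlip : ∀ z₁ z₂ : Measure S, IsProbabilityMeasure z₁ → z₁ ≪ lam →
      IsProbabilityMeasure z₂ → z₂ ≪ lam → |u z₁ - u z₂| ≤ γu * tvDist z₁ z₂)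
    (hint : ∀ z : Measure S, IsProbabilityMeasure z → z ≪ lam →
      Integrable (fun a => u (hmap lam m z a) * (xMa lam m z a Set.univ).toReal) τ)
    (x y : Measure S)
    (hx : IsProbabilityMeasure x) (hxl : x ≪ lam)
    (hy : IsProbabilityMeasure y) (hyl : y ≪ lam) :
    |(∫ a, u (hmap lam m x a) * (xMa lam m x a Set.univ).toReal ∂τ) -
        ∫ a, u (hmap lam m y a) * (xMa lam m y a Set.univ).toReal ∂τ| ≤
      (Cu + 2 * γu) * tvDist x y :=
  stmt_14_general lam τ m hm hnorm u Cu γu hγu hbd hlip hint x y hx hxl hy hyl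
end

section
/- Define m^{(1,2)} : S × S × A₁ × A₂ → [0, ∞) by m^{(1,2)}(s,t,a₁,a₂) = ∫_S m₁(s,s',a₁) m₂(s',t,a₂) λ(ds'), and for x ∈ K let xM^{(1,2)}_{(a₁,a₂)} be the measure F ↦ ∫_S ∫_F m^{(1,2)}(s,t,a₁,a₂) λ(dt) x(ds), with the corresponding normalized map h^{(1,2)}(x,(a₁,a₂)) defined with fallback x when the total mass vanishes. Define the transition operators T₁u(x) = ∫_{A₁} u(h₁(x,a₁)) ‖xM¹_{a₁}‖ τ₁(da₁), T₂u(x) = ∫_{A₂} u(h₂(x,a₂)) ‖xM²_{a₂}‖ τ₂(da₂), and T^{(1,2)}u(x) = ∫_{A₁×A₂} u(h^{(1,2)}(x,(a₁,a₂))) ‖xM^{(1,2)}_{(a₁,a₂)}‖ (τ₁⊗τ₂)(d(a₁,a₂)). Then for every u : K → ℝ that is bounded and measurable with respect to the σ-algebra generated by the evaluation maps z ↦ z(F), F ∈ 𝓕, and for every x ∈ K, T₁(T₂u)(x) = T^{(1,2)}u(x). -/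
/-! The density `m^{(1,2)}` is the kernel of the composite `y ↦ (yM¹_{a₁})M²_{a₂}`, and each
`y ↦ yMⁱ_a` commutes with scalar multiples. The integrand `u(μ/‖μ‖)‖μ‖` is homogeneous of
degree one in `μ` (whatever the fallback), so normalizing after the first step cancels against
the weight `‖xM¹_{a₁}‖`. Fubini on `τ₁ ⊗ τ₂` then gives the identity; it applies because `u` is
bounded and `∫ ‖xM^{(1,2)}_a‖ d(τ₁ ⊗ τ₂) = x(S)` is finite. -/

open MeasureTheory
open scoped NNReal ENNReal

/-- The measure `xM^{(1,2)}_{(a₁,a₂)}` of the composed HMM, with density kernel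
`m^{(1,2)}(s,t,a₁,a₂) = ∫_S m₁(s,s',a₁) m₂(s',t,a₂) λ(ds')`. -/
noncomputable def xM12 {S A₁ A₂ : Type*}
    [MeasurableSpace S] [MeasurableSpace A₁] [MeasurableSpace A₂]
    (lam : Measure S) (m₁ : S → S → A₁ → ℝ≥0) (m₂ : S → S → A₂ → ℝ≥0)
    (x : Measure S) (a : A₁ × A₂) : Measure S :=
  x.bind fun s =>
    lam.withDensity fun t => ∫⁻ s', (m₁ s s' a.1 : ℝ≥0∞) * (m₂ s' t a.2 : ℝ≥0∞) ∂lam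

/-- The normalized map `h^{(1,2)}` of the composed HMM, with fallback `x` when the total
mass vanishes. -/
noncomputable def h12 {S A₁ A₂ : Type*}
    [MeasurableSpace S] [MeasurableSpace A₁] [MeasurableSpace A₂]
    (lam : Measure S) (m₁ : S → S → A₁ → ℝ≥0) (m₂ : S → S → A₂ → ℝ≥0)
    (x : Measure S) (a : A₁ × A₂) : Measure S :=
  if 0 < xM12 lam m₁ m₂ x a Set.univ then
    (xM12 lam m₁ m₂ x a Set.univ)⁻¹ • xM12 lam m₁ m₂ x a
  else x

open Function Set

section DensityKernel

variable {S : Type*} [MeasurableSpace S] {lam : Measure S} [SFinite lam]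

theorem bind_withDensity_eq_withDensity_lintegral {x : Measure S} [SFinite x]
    {M : S → S → ℝ≥0∞} (hM : Measurable (uncurry M)) :
    (x.bind fun s => lam.withDensity (M s)) = lam.withDensity fun t => ∫⁻ s, M s t ∂x := by
  ext F hF
  rw [Measure.bind_apply hF (measurable_withDensity hM).aemeasurable, withDensity_apply _ hF]
  simp_rw [withDensity_apply _ hF]
  exact lintegral_lintegral_swap hM.aemeasurable

theorem bind_withDensity_bind_withDensity (x : Measure S) {M₁ M₂ : S → S → ℝ≥0∞}
    (hM₁ : Measurable (uncurry M₁)) (hM₂ : Measurable (uncurry M₂)) :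
    ((x.bind fun s => lam.withDensity (M₁ s)).bind fun t => lam.withDensity (M₂ t)) =
      x.bind fun s => lam.withDensity fun t => ∫⁻ s', M₁ s s' * M₂ s' t ∂lam := by
  rw [Measure.bind_bind (measurable_withDensity hM₁).aemeasurable
    (measurable_withDensity hM₂).aemeasurable]
  congr with s : 1
  rw [bind_withDensity_eq_withDensity_lintegral hM₂]
  congr with t
  exact lintegral_withDensity_eq_lintegral_mul _ hM₁.of_uncurry_left
    (hM₂.comp (measurable_id.prodMk measurable_const))

end DensityKernel

section Normalization

variable {S A : Type*} [MeasurableSpace S] [MeasurableSpace A]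

noncomputable def normalizeOr (x μ : Measure S) : Measure S :=
  if 0 < μ univ then (μ univ)⁻¹ • μ else x

theorem normalizeOr_of_ne_zero (x : Measure S) {μ : Measure S} (hμ : μ univ ≠ 0) :
    normalizeOr x μ = (μ univ)⁻¹ • μ :=
  if_pos (pos_iff_ne_zero.mpr hμ)

theorem Measurable.normalizeOr (x : Measure S) {μ : A → Measure S} (hμ : Measurable μ) :
    Measurable fun a => normalizeOr x (μ a) := by
  have hmass : Measurable fun a => μ a univ := Measure.measurable_measure.mp hμ _ MeasurableSet.univ
  refine Measurable.ite (measurableSet_lt measurable_const hmass) ?_ measurable_const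
  refine Measure.measurable_of_measurable_coe _ fun F hF => ?_
  simp only [Measure.smul_apply, smul_eq_mul]
  exact hmass.inv.mul (Measure.measurable_measure.mp hμ _ hF)

theorem normalizeOr_smul (x y : Measure S) {μ : Measure S} {c : ℝ≥0∞} (hc₀ : c ≠ 0)
    (hc : c ≠ ∞) (hμ : μ univ ≠ 0) : normalizeOr x (c • μ) = normalizeOr y μ := by
  have hcμ : (c • μ) univ ≠ 0 := by simp [hc₀, hμ]
  rw [normalizeOr_of_ne_zero x hcμ, normalizeOr_of_ne_zero y hμ, Measure.smul_apply,
    smul_smul, smul_eq_mul, ENNReal.mul_inv (.inl hc₀) (.inl hc), mul_right_comm,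
    ENNReal.inv_mul_cancel hc₀ hc, one_mul]

noncomputable def massWeighted (u : Measure S → ℝ) (x μ : Measure S) : ℝ :=
  u (normalizeOr x μ) * (μ univ).toReal

theorem massWeighted_smul (u : Measure S → ℝ) (x y : Measure S) {μ : Measure S} {c : ℝ≥0∞}
    (hc : c ≠ ∞) : massWeighted u x (c • μ) = c.toReal * massWeighted u y μ := by
  rcases eq_or_ne c 0 with rfl | hc₀
  · simp [massWeighted]
  rcases eq_or_ne (μ univ) 0 with hμ | hμ
  · simp [massWeighted, hμ]
  rw [massWeighted, massWeighted, normalizeOr_smul x y hc₀ hc hμ, Measure.smul_apply,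
    smul_eq_mul, ENNReal.toReal_mul]
  ring

theorem massWeighted_map_normalizeOr (u : Measure S → ℝ) (x : Measure S)
    {L : Measure S → Measure S} (hL : ∀ (c : ℝ≥0∞) ν, L (c • ν) = c • L ν) {μ : Measure S}
    (hμ : μ univ ≠ ∞) :
    massWeighted u (normalizeOr x μ) (L (normalizeOr x μ)) * (μ univ).toReal =
      massWeighted u x (L μ) := by
  rcases eq_or_ne (μ univ) 0 with hμ₀ | hμ₀
  · rw [Measure.measure_univ_eq_zero.mp hμ₀, ← zero_smul ℝ≥0∞ (0 : Measure S), hL,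
      massWeighted_smul u x x ENNReal.zero_ne_top]
    simp
  rw [normalizeOr_of_ne_zero x hμ₀, hL, massWeighted_smul u _ x (ENNReal.inv_ne_top.mpr hμ₀),
    ENNReal.toReal_inv, mul_right_comm, inv_mul_cancel₀ (ENNReal.toReal_ne_zero.mpr ⟨hμ₀, hμ⟩),
    one_mul]

theorem integrable_massWeighted {u : Measure S → ℝ} (hu : Measurable u) {C : ℝ}
    (hC : ∀ z, |u z| ≤ C) (x : Measure S) {τ : Measure A} {μ : A → Measure S}
    (hμ : Measurable μ) (hfin : ∫⁻ a, μ a univ ∂τ ≠ ∞) :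
    Integrable (fun a => massWeighted u x (μ a)) τ := by
  have hmass : Measurable fun a => μ a univ := Measure.measurable_measure.mp hμ _ MeasurableSet.univ
  refine ((integrable_toReal_of_lintegral_ne_top hmass.aemeasurable hfin).const_mul C).mono'
    ((hu.comp (hμ.normalizeOr x)).mul hmass.ennreal_toReal).aestronglyMeasurable
    (.of_forall fun a => ?_)
  rw [massWeighted, Real.norm_eq_abs, abs_mul, abs_of_nonneg ENNReal.toReal_nonneg]
  exact mul_le_mul_of_nonneg_right (hC _) ENNReal.toReal_nonneg

end Normalization

section TransitionMeasures

variable {S A A₁ A₂ : Type*} [MeasurableSpace S] [MeasurableSpace A] [MeasurableSpace A₁]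
  [MeasurableSpace A₂] {lam : Measure S} [SFinite lam]

theorem xMa_eq_withDensity {m : S → S → A → ℝ≥0}
    (hm : Measurable fun p : S × S × A => m p.1 p.2.1 p.2.2) (x : Measure S) [SFinite x] (a : A) :
    xMa lam m x a = lam.withDensity fun t => ∫⁻ s, (m s t a : ℝ≥0∞) ∂x :=
  bind_withDensity_eq_withDensity_lintegral (by fun_prop)

theorem sFinite_xMa {m : S → S → A → ℝ≥0}
    (hm : Measurable fun p : S × S × A => m p.1 p.2.1 p.2.2) (x : Measure S) [SFinite x] (a : A) :
    SFinite (xMa lam m x a) := by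
  rw [xMa_eq_withDensity hm]
  infer_instance

theorem measurable_xMa {m : S → S → A → ℝ≥0}
    (hm : Measurable fun p : S × S × A => m p.1 p.2.1 p.2.2) (x : Measure S) [SFinite x] :
    Measurable (xMa lam m x) := by
  rw [funext (xMa_eq_withDensity hm x)]
  exact measurable_withDensity (by fun_prop)

theorem lintegral_xMa_univ (τ : Measure A) [SFinite τ] {m : S → S → A → ℝ≥0}
    (hm : Measurable fun p : S × S × A => m p.1 p.2.1 p.2.2)
    (hnorm : ∀ s, ∫⁻ t, ∫⁻ a, (m s t a : ℝ≥0∞) ∂τ ∂lam = 1) (x : Measure S) [SFinite x] :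
    ∫⁻ a, xMa lam m x a univ ∂τ = x univ := by
  calc ∫⁻ a, xMa lam m x a univ ∂τ
      = ∫⁻ a, ∫⁻ s, ∫⁻ t, (m s t a : ℝ≥0∞) ∂lam ∂x ∂τ := by
        congr with a
        rw [xMa, Measure.bind_apply MeasurableSet.univ
          (measurable_withDensity (f := fun s t => (m s t a : ℝ≥0∞)) (by fun_prop)).aemeasurable]
        simp_rw [withDensity_apply _ MeasurableSet.univ, Measure.restrict_univ]
    _ = ∫⁻ s, ∫⁻ t, ∫⁻ a, (m s t a : ℝ≥0∞) ∂τ ∂lam ∂x := by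
        rw [lintegral_lintegral_swap (by fun_prop)]
        congr with s
        exact lintegral_lintegral_swap (by fun_prop)
    _ = x univ := by simp [hnorm]

theorem xM12_eq_xMa_xMa {m₁ : S → S → A₁ → ℝ≥0} {m₂ : S → S → A₂ → ℝ≥0}
    (hm₁ : Measurable fun p : S × S × A₁ => m₁ p.1 p.2.1 p.2.2)
    (hm₂ : Measurable fun p : S × S × A₂ => m₂ p.1 p.2.1 p.2.2) (x : Measure S) (a₁ : A₁)
    (a₂ : A₂) : xM12 lam m₁ m₂ x (a₁, a₂) = xMa lam m₂ (xMa lam m₁ x a₁) a₂ :=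
  (bind_withDensity_bind_withDensity x (by fun_prop) (by fun_prop)).symm

theorem measurable_xM12 {m₁ : S → S → A₁ → ℝ≥0} {m₂ : S → S → A₂ → ℝ≥0}
    (hm₁ : Measurable fun p : S × S × A₁ => m₁ p.1 p.2.1 p.2.2)
    (hm₂ : Measurable fun p : S × S × A₂ => m₂ p.1 p.2.1 p.2.2) (x : Measure S) [SFinite x] :
    Measurable (xM12 lam m₁ m₂ x) := by
  have hM : ∀ a : A₁ × A₂, Measurable (uncurry fun s t =>
      ∫⁻ s', (m₁ s s' a.1 : ℝ≥0∞) * m₂ s' t a.2 ∂lam) := fun a => by fun_prop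
  rw [show xM12 lam m₁ m₂ x = fun a => lam.withDensity _ from
    funext fun a => bind_withDensity_eq_withDensity_lintegral (hM a)]
  exact measurable_withDensity (by fun_prop)

theorem lintegral_xM12_univ (τ₁ : Measure A₁) [SFinite τ₁] (τ₂ : Measure A₂) [SFinite τ₂]
    {m₁ : S → S → A₁ → ℝ≥0} {m₂ : S → S → A₂ → ℝ≥0}
    (hm₁ : Measurable fun p : S × S × A₁ => m₁ p.1 p.2.1 p.2.2)
    (hm₂ : Measurable fun p : S × S × A₂ => m₂ p.1 p.2.1 p.2.2)
    (hnorm₁ : ∀ s, ∫⁻ t, ∫⁻ a, (m₁ s t a : ℝ≥0∞) ∂τ₁ ∂lam = 1)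
    (hnorm₂ : ∀ s, ∫⁻ t, ∫⁻ a, (m₂ s t a : ℝ≥0∞) ∂τ₂ ∂lam = 1) (x : Measure S) [SFinite x] :
    ∫⁻ a, xM12 lam m₁ m₂ x a univ ∂(τ₁.prod τ₂) = x univ := by
  rw [lintegral_prod _ (Measure.measurable_measure.mp (measurable_xM12 hm₁ hm₂ x) _
    MeasurableSet.univ).aemeasurable]
  calc ∫⁻ a₁, ∫⁻ a₂, xM12 lam m₁ m₂ x (a₁, a₂) univ ∂τ₂ ∂τ₁
      = ∫⁻ a₁, xMa lam m₁ x a₁ univ ∂τ₁ := by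
        congr with a₁
        have := sFinite_xMa (lam := lam) hm₁ x a₁
        simp_rw [xM12_eq_xMa_xMa hm₁ hm₂]
        exact lintegral_xMa_univ (lam := lam) τ₂ hm₂ hnorm₂ _
    _ = x univ := lintegral_xMa_univ τ₁ hm₁ hnorm₁ x

end TransitionMeasures

theorem stmt_16_general {S A₁ A₂ : Type*}
    [MeasurableSpace S] [MeasurableSpace A₁] [MeasurableSpace A₂]
    (lam : Measure S) [SigmaFinite lam]
    (τ₁ : Measure A₁) [SigmaFinite τ₁] (τ₂ : Measure A₂) [SigmaFinite τ₂]
    (m₁ : S → S → A₁ → ℝ≥0) (m₂ : S → S → A₂ → ℝ≥0)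
    (hm₁ : Measurable fun p : S × S × A₁ => m₁ p.1 p.2.1 p.2.2)
    (hm₂ : Measurable fun p : S × S × A₂ => m₂ p.1 p.2.1 p.2.2)
    (hnorm₁ : ∀ s : S, ∫⁻ t, ∫⁻ a, (m₁ s t a : ℝ≥0∞) ∂τ₁ ∂lam = 1)
    (hnorm₂ : ∀ s : S, ∫⁻ t, ∫⁻ a, (m₂ s t a : ℝ≥0∞) ∂τ₂ ∂lam = 1)
    (u : Measure S → ℝ) (hu : Measurable u) (hub : ∃ C : ℝ, ∀ z, |u z| ≤ C)
    (x : Measure S) (hx : IsProbabilityMeasure x) :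
    ∫ a₁, (∫ a₂, u (hmap lam m₂ (hmap lam m₁ x a₁) a₂) *
            (xMa lam m₂ (hmap lam m₁ x a₁) a₂ Set.univ).toReal ∂τ₂) *
          (xMa lam m₁ x a₁ Set.univ).toReal ∂τ₁ =
      ∫ a, u (h12 lam m₁ m₂ x a) * (xM12 lam m₁ m₂ x a Set.univ).toReal ∂(τ₁.prod τ₂) := by
  obtain ⟨C, hC⟩ := hub
  have hfin : ∀ᵐ a₁ ∂τ₁, xMa lam m₁ x a₁ univ ≠ ∞ :=
    ae_lt_top (Measure.measurable_measure.mp (measurable_xMa hm₁ x) _ MeasurableSet.univ)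
      (by simp [lintegral_xMa_univ τ₁ hm₁ hnorm₁]) |>.mono fun _ => ne_of_lt
  have hint : Integrable (fun a => massWeighted u x (xM12 lam m₁ m₂ x a)) (τ₁.prod τ₂) :=
    integrable_massWeighted hu hC x (measurable_xM12 hm₁ hm₂ x)
      (by simp [lintegral_xM12_univ τ₁ τ₂ hm₁ hm₂ hnorm₁ hnorm₂])
  change _ = ∫ a, massWeighted u x (xM12 lam m₁ m₂ x a) ∂(τ₁.prod τ₂)
  rw [integral_prod _ hint]
  refine integral_congr_ae (hfin.mono fun a₁ ha₁ =>
    (integral_mul_const _ _).symm.trans (integral_congr_ae (.of_forall fun a₂ => ?_)))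
  dsimp only
  rw [xM12_eq_xMa_xMa hm₁ hm₂]
  exact massWeighted_map_normalizeOr u x (L := fun ν => xMa lam m₂ ν a₂)
    (fun c ν => Measure.bind_smul c ν _) ha₁

/-- `T₁(T₂u)(x) = T^{(1,2)}u(x)` for every bounded, measurable
`u : Measure S → ℝ` (with respect to the σ-algebra generated by the evaluation maps)
and every `x ∈ K`, where
`T₁u(x) = ∫_{A₁} u(h₁(x,a₁)) ‖xM¹_{a₁}‖ τ₁(da₁)`,
`T₂u(x) = ∫_{A₂} u(h₂(x,a₂)) ‖xM²_{a₂}‖ τ₂(da₂)`, and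
`T^{(1,2)}u(x) = ∫_{A₁×A₂} u(h^{(1,2)}(x,(a₁,a₂))) ‖xM^{(1,2)}_{(a₁,a₂)}‖ (τ₁⊗τ₂)(da₁,da₂)`. -/
theorem stmt_16 {S A₁ A₂ : Type*}
    [MetricSpace S] [CompleteSpace S] [TopologicalSpace.SeparableSpace S]
    [MeasurableSpace S] [BorelSpace S]
    [MetricSpace A₁] [CompleteSpace A₁] [TopologicalSpace.SeparableSpace A₁]
    [MeasurableSpace A₁] [BorelSpace A₁]
    [MetricSpace A₂] [CompleteSpace A₂] [TopologicalSpace.SeparableSpace A₂]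
    [MeasurableSpace A₂] [BorelSpace A₂]
    (lam : Measure S) [SigmaFinite lam]
    (τ₁ : Measure A₁) [SigmaFinite τ₁] (τ₂ : Measure A₂) [SigmaFinite τ₂]
    (m₁ : S → S → A₁ → ℝ≥0) (m₂ : S → S → A₂ → ℝ≥0)
    (hm₁ : Measurable fun p : S × S × A₁ => m₁ p.1 p.2.1 p.2.2)
    (hm₂ : Measurable fun p : S × S × A₂ => m₂ p.1 p.2.1 p.2.2)
    (hnorm₁ : ∀ s : S, ∫⁻ t, ∫⁻ a, (m₁ s t a : ℝ≥0∞) ∂τ₁ ∂lam = 1)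
    (hnorm₂ : ∀ s : S, ∫⁻ t, ∫⁻ a, (m₂ s t a : ℝ≥0∞) ∂τ₂ ∂lam = 1)
    (u : Measure S → ℝ) (hu : Measurable u) (hub : ∃ C : ℝ, ∀ z, |u z| ≤ C)
    (x : Measure S) (hx : IsProbabilityMeasure x) (hxl : x ≪ lam) :
    ∫ a₁, (∫ a₂, u (hmap lam m₂ (hmap lam m₁ x a₁) a₂) *
            (xMa lam m₂ (hmap lam m₁ x a₁) a₂ Set.univ).toReal ∂τ₂) *
          (xMa lam m₁ x a₁ Set.univ).toReal ∂τ₁ =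
      ∫ a, u (h12 lam m₁ m₂ x a) * (xM12 lam m₁ m₂ x a Set.univ).toReal ∂(τ₁.prod τ₂) :=
  stmt_16_general lam τ₁ τ₂ m₁ m₂ hm₁ hm₂ hnorm₁ hnorm₂ u hu hub x hx
end

section
/- Suppose that for every ε > 0 there exists η > 0 such that whenever ϱ(a,b) < η one has λ(S₊(a) Δ S₊(b)) < ε and |q(t,a) − q(t,b)| < ε for all t ∈ S₊(a) ∩ S₊(b). Then the map (x, a) ↦ xM_a, where xM_a(F) = ∫_S ∫_F p(s,t) q(t,a) λ(dt) x(ds), is jointly continuous from (finite nonnegative measures on (S,𝓕) absolutely continuous with respect to λ, with the total variation distance) × (A, ϱ) into the finite measures on (S,𝓕) with the total variation distance; explicitly, for every such measure x, every a ∈ A and every ε > 0 there is δ > 0 such that δ_TV(xM_a, yM_b) < ε whenever y is a finite nonnegative measure absolutely continuous with respect to λ with δ_TV(x, y) < δ and b ∈ A with ϱ(a, b) < δ. -/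
open MeasureTheory
open scoped NNReal ENNReal symmDiff

/-- The measure `xM_a`, `xM_a(F) = ∫_S ∫_F p(s,t) q(t,a) λ(dt) x(ds)`. -/
noncomputable def xMpq {S A : Type*} [MeasurableSpace S]
    (lam : Measure S) (p : S → S → ℝ≥0) (q : S → A → ℝ≥0)
    (x : Measure S) (a : A) : Measure S :=
  x.bind fun s => lam.withDensity fun t => (p s t : ℝ≥0∞) * (q t a : ℝ≥0∞)

/-
Write `k_a(s, F) = ∫_F p(s,t) q(t,a) λ(dt)`, so that `xM_a(F) = ∫ k_a(·, F) dx`. Pointwise,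
`p q_a ≤ p q_b + ε p + C_p C_q 𝟙_{S₊(a) \ S₊(b)}`: on `S₊(a) ∩ S₊(b)` the densities are
`ε`-close, and off `S₊(a)` the left side vanishes. As `∫ p(s,·) dλ = 1`, this gives
`k_a(s, F) ≤ k_b(s, F) + ε + C_p C_q λ(S₊(a) Δ S₊(b))`. On the other hand, a Hahn decomposition
of `x - y` shows that integrating a function bounded by `C` against `x` instead of `y` costs at
most `C δ_TV(x, y)`. Since `k_a ≤ C_q`, both estimates together bound `δ_TV(xM_a, yM_b)` by a
quantity that tends to `0` with `δ_TV(x, y)` and `ε`.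
-/

namespace MeasureTheory.Measure

variable {S : Type*} [MeasurableSpace S]

theorem exists_le_add_of_forall_apply_le_add {μ ν : Measure S} [IsFiniteMeasure μ]
    [IsFiniteMeasure ν] {d : ℝ≥0∞} (h : ∀ F, MeasurableSet F → μ F ≤ ν F + d) :
    ∃ ρ : Measure S, μ ≤ ν + ρ ∧ ρ Set.univ ≤ d := by
  obtain ⟨u, hu, hνμ, hμν⟩ := hahn_decomposition μ ν
  have restrict_le_restrict {μ₁ μ₂ : Measure S} {v : Set S}
      (h : ∀ t, MeasurableSet t → t ⊆ v → μ₁ t ≤ μ₂ t) (hv : MeasurableSet v) :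
      μ₁.restrict v ≤ μ₂.restrict v := Measure.le_iff.2 fun t ht => by
    simpa only [restrict_apply ht] using h _ (ht.inter hv) Set.inter_subset_right
  have hu_le := restrict_le_restrict hνμ hu
  refine ⟨μ.restrict u - ν.restrict u, ?_, ?_⟩
  · calc μ = (μ.restrict u - ν.restrict u + ν.restrict u) + μ.restrict uᶜ := by
          rw [sub_add_cancel_of_le hu_le, restrict_add_restrict_compl hu]
      _ ≤ (μ.restrict u - ν.restrict u + ν.restrict u) + ν.restrict uᶜ :=
          add_le_add_right (restrict_le_restrict hμν hu.compl) _
      _ = ν + (μ.restrict u - ν.restrict u) := by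
          rw [add_assoc, restrict_add_restrict_compl hu, add_comm]
  · rw [sub_apply MeasurableSet.univ hu_le, restrict_apply_univ, restrict_apply_univ]
    exact tsub_le_iff_left.2 (h u hu)

end MeasureTheory.Measure

namespace MeasureTheory

variable {S T : Type*} [MeasurableSpace S] [MeasurableSpace T]

theorem lintegral_le_lintegral_add_of_forall_apply_le_add {μ ν : Measure S} [IsFiniteMeasure μ]
    [IsFiniteMeasure ν] {d : ℝ≥0∞} (h : ∀ F, MeasurableSet F → μ F ≤ ν F + d)
    {f : S → ℝ≥0∞} {C : ℝ≥0∞} (hf : ∀ s, f s ≤ C) :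
    ∫⁻ s, f s ∂μ ≤ ∫⁻ s, f s ∂ν + C * d := by
  obtain ⟨ρ, hμ, hρ⟩ := Measure.exists_le_add_of_forall_apply_le_add h
  calc ∫⁻ s, f s ∂μ ≤ ∫⁻ s, f s ∂(ν + ρ) := lintegral_mono' hμ le_rfl
    _ = ∫⁻ s, f s ∂ν + ∫⁻ s, f s ∂ρ := lintegral_add_measure f ν ρ
    _ ≤ ∫⁻ s, f s ∂ν + ∫⁻ _, C ∂ρ := by gcongr; exact hf _
    _ ≤ ∫⁻ s, f s ∂ν + C * d := by rw [lintegral_const]; gcongr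

theorem bind_apply_le_bind_apply_add {μ ν : Measure S}
    [IsFiniteMeasure μ] [IsFiniteMeasure ν] {d : ℝ≥0∞}
    (h : ∀ F, MeasurableSet F → μ F ≤ ν F + d) {κ₁ κ₂ : S → Measure T}
    (hκ₁ : Measurable κ₁) (hκ₂ : Measurable κ₂) {F : Set T} (hF : MeasurableSet F)
    {C r : ℝ≥0∞} (hC : ∀ s, κ₁ s F ≤ C) (hr : ∀ s, κ₁ s F ≤ κ₂ s F + r) :
    μ.bind κ₁ F ≤ ν.bind κ₂ F + (C * d + r * ν Set.univ) := by
  rw [Measure.bind_apply hF hκ₁.aemeasurable, Measure.bind_apply hF hκ₂.aemeasurable]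
  calc ∫⁻ s, κ₁ s F ∂μ ≤ ∫⁻ s, κ₁ s F ∂ν + C * d :=
        lintegral_le_lintegral_add_of_forall_apply_le_add h hC
    _ ≤ ∫⁻ s, (κ₂ s F + r) ∂ν + C * d := by gcongr; exact hr _
    _ = ∫⁻ s, κ₂ s F ∂ν + (C * d + r * ν Set.univ) := by
        rw [lintegral_add_right _ measurable_const, lintegral_const]; ring

theorem setLIntegral_mul_le_setLIntegral_mul_add {ν : Measure S} {w f g : S → ℝ≥0}
    (hw : Measurable w) (hg : Measurable g) {Cw Cf e' : ℝ≥0} {e : ℝ≥0∞}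
    (hwC : ∀ t, w t ≤ Cw) (hfC : ∀ t, f t ≤ Cf)
    (hD : ν ({t | 0 < f t} \ {t | 0 < g t}) ≤ e)
    (hfg : ∀ t, 0 < f t → 0 < g t → f t ≤ g t + e') (F : Set S) :
    ∫⁻ t in F, (w t * f t : ℝ≥0∞) ∂ν ≤
      ∫⁻ t in F, (w t * g t : ℝ≥0∞) ∂ν + (e' * ∫⁻ t, (w t : ℝ≥0∞) ∂ν + Cw * Cf * e) := by
  set D := {t | 0 < f t} \ {t | 0 < g t}
  set c : S → ℝ≥0∞ := D.indicator fun _ ↦ Cw * Cf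
  have hpt : ∀ t, (w t * f t : ℝ≥0∞) ≤ w t * g t + (w t * e' + c t) := by
    intro t
    by_cases htD : t ∈ D
    · rw [show c t = Cw * Cf from Set.indicator_of_mem htD _]
      calc (w t * f t : ℝ≥0∞) ≤ Cw * Cf :=
            mul_le_mul' (by exact_mod_cast hwC t) (by exact_mod_cast hfC t)
        _ ≤ _ := le_add_left le_add_self
    · rcases eq_zero_or_pos (f t) with hf0 | hf0
      · simp [hf0]
      · have hg0 : 0 < g t := pos_iff_ne_zero.2 (by simpa [D, hf0] using htD)
        rw [show c t = 0 from Set.indicator_of_notMem htD _, add_zero, ← mul_add]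
        gcongr
        exact_mod_cast hfg t hf0 hg0
  calc ∫⁻ t in F, (w t * f t : ℝ≥0∞) ∂ν
      ≤ ∫⁻ t in F, (w t * g t + (w t * e' + c t)) ∂ν := lintegral_mono hpt
    _ = ∫⁻ t in F, (w t * g t : ℝ≥0∞) ∂ν +
          (∫⁻ t in F, (w t * e' : ℝ≥0∞) ∂ν + ∫⁻ t in F, c t ∂ν) := by
        rw [lintegral_add_left (by fun_prop), lintegral_add_left (by fun_prop)]
    _ ≤ ∫⁻ t in F, (w t * g t : ℝ≥0∞) ∂ν + (∫⁻ t, (w t * e' : ℝ≥0∞) ∂ν + ∫⁻ t, c t ∂ν) := by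
        gcongr <;> exact Measure.restrict_le_self
    _ ≤ ∫⁻ t in F, (w t * g t : ℝ≥0∞) ∂ν + (e' * ∫⁻ t, (w t : ℝ≥0∞) ∂ν + Cw * Cf * e) := by
        rw [lintegral_mul_const' _ _ ENNReal.coe_ne_top, mul_comm]
        gcongr
        exact (lintegral_indicator_const_le D _).trans (by gcongr)

end MeasureTheory

section TotalVariation

variable {S : Type*} [MeasurableSpace S]

theorem tvDist_comm (z₁ z₂ : Measure S) : tvDist z₁ z₂ = tvDist z₂ z₁ := add_comm _ _

theorem toReal_sub_toReal_le_sSup (z₁ z₂ : Measure S) [IsFiniteMeasure z₁] {F : Set S}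
    (hF : MeasurableSet F) :
    (z₁ F).toReal - (z₂ F).toReal ≤
      sSup {d : ℝ | ∃ F : Set S, MeasurableSet F ∧ d = (z₁ F).toReal - (z₂ F).toReal} := by
  refine le_csSup ⟨(z₁ Set.univ).toReal, ?_⟩ ⟨F, hF, rfl⟩
  rintro _ ⟨G, -, rfl⟩
  have := ENNReal.toReal_mono (measure_ne_top z₁ _) (measure_mono (Set.subset_univ G))
  linarith [ENNReal.toReal_nonneg (a := z₂ G)]

theorem apply_le_apply_add_of_tvDist_lt {z₁ z₂ : Measure S} [IsFiniteMeasure z₁]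
    [IsFiniteMeasure z₂] {δ : ℝ} (h : tvDist z₁ z₂ < δ) {F : Set S} (hF : MeasurableSet F) :
    z₁ F ≤ z₂ F + ENNReal.ofReal δ := by
  have h₁ := toReal_sub_toReal_le_sSup z₁ z₂ hF
  have h₂ := toReal_sub_toReal_le_sSup z₂ z₁ MeasurableSet.empty
  simp only [measure_empty, ENNReal.toReal_zero, sub_zero] at h₂
  have : (z₁ F).toReal ≤ (z₂ F).toReal + δ := by unfold tvDist at h; linarith
  calc z₁ F = ENNReal.ofReal (z₁ F).toReal := (ENNReal.ofReal_toReal (measure_ne_top _ _)).symm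
    _ ≤ ENNReal.ofReal ((z₂ F).toReal + δ) := ENNReal.ofReal_le_ofReal this
    _ ≤ ENNReal.ofReal (z₂ F).toReal + ENNReal.ofReal δ := ENNReal.ofReal_add_le
    _ = z₂ F + ENNReal.ofReal δ := by rw [ENNReal.ofReal_toReal (measure_ne_top _ _)]

theorem tvDist_le_of_forall_apply_le_add {z₁ z₂ : Measure S} [IsFiniteMeasure z₁]
    [IsFiniteMeasure z₂] {c : ℝ≥0} (h₁₂ : ∀ F, MeasurableSet F → z₁ F ≤ z₂ F + c)
    (h₂₁ : ∀ F, MeasurableSet F → z₂ F ≤ z₁ F + c) :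
    tvDist z₁ z₂ ≤ 2 * c := by
  have sSup_le {μ ν : Measure S} [IsFiniteMeasure ν] (h : ∀ F, MeasurableSet F → μ F ≤ ν F + c) :
      sSup {d : ℝ | ∃ F : Set S, MeasurableSet F ∧ d = (μ F).toReal - (ν F).toReal} ≤ c := by
    refine Real.sSup_le ?_ c.coe_nonneg
    rintro _ ⟨F, hF, rfl⟩
    have := ENNReal.toReal_le_add (h F hF) (measure_ne_top ν F) ENNReal.coe_ne_top
    rw [ENNReal.coe_toReal] at this
    linarith
  unfold tvDist
  linarith [sSup_le h₁₂, sSup_le h₂₁]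

end TotalVariation

section Kernel

variable {S A : Type*} [MeasurableSpace S] {lam : Measure S}
  {p : S → S → ℝ≥0} {q : S → A → ℝ≥0}

theorem measurable_withDensity_mul [MeasurableSpace A] [SFinite lam]
    (hpm : Measurable fun z : S × S => p z.1 z.2) (hqm : Measurable fun z : S × A => q z.1 z.2)
    (a : A) : Measurable fun s => lam.withDensity fun t => (p s t : ℝ≥0∞) * (q t a : ℝ≥0∞) :=
  measurable_withDensity <| by
    have hqa : Measurable fun t => q t a := hqm.comp (measurable_id.prodMk measurable_const)
    fun_prop

theorem withDensity_mul_apply_le [SFinite lam] (hpn : ∀ s, ∫⁻ t, (p s t : ℝ≥0∞) ∂lam = 1)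
    {a : A} {Cq : ℝ≥0} (hqb : ∀ t, q t a ≤ Cq) (s : S) (F : Set S) :
    lam.withDensity (fun t => (p s t : ℝ≥0∞) * (q t a : ℝ≥0∞)) F ≤ Cq := by
  rw [withDensity_apply']
  calc ∫⁻ t in F, (p s t : ℝ≥0∞) * q t a ∂lam ≤ ∫⁻ t, (p s t : ℝ≥0∞) * Cq ∂lam :=
        (setLIntegral_le_lintegral F _).trans (lintegral_mono fun t => by gcongr; exact hqb t)
    _ = Cq := by rw [lintegral_mul_const' _ _ ENNReal.coe_ne_top, hpn s, one_mul]

theorem isFiniteMeasure_xMpq [SFinite lam] (hpn : ∀ s, ∫⁻ t, (p s t : ℝ≥0∞) ∂lam = 1)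
    {a : A} {Cq : ℝ≥0} (hqb : ∀ t, q t a ≤ Cq) (x : Measure S) [IsFiniteMeasure x] :
    IsFiniteMeasure (xMpq lam p q x a) := by
  refine ⟨(Measure.bind_apply_le _ MeasurableSet.univ).trans_lt ?_⟩
  calc _ ≤ ∫⁻ _, (Cq : ℝ≥0∞) ∂x := lintegral_mono fun s => withDensity_mul_apply_le hpn hqb s _
    _ < ∞ := by
      rw [lintegral_const]
      exact ENNReal.mul_lt_top ENNReal.coe_lt_top (measure_lt_top _ _)

theorem xMpq_apply_le_add [MeasurableSpace A] [SFinite lam]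
    (hpm : Measurable fun z : S × S => p z.1 z.2) (hqm : Measurable fun z : S × A => q z.1 z.2)
    {Cp Cq : ℝ≥0} (hpb : ∀ s t, p s t ≤ Cp)
    (hpn : ∀ s, ∫⁻ t, (p s t : ℝ≥0∞) ∂lam = 1) {x y : Measure S} [IsFiniteMeasure x]
    [IsFiniteMeasure y] {d e : ℝ≥0} (hxy : ∀ F, MeasurableSet F → x F ≤ y F + d) {a b : A}
    (hqb : ∀ t, q t a ≤ Cq) (hsd : lam ({t | 0 < q t a} ∆ {t | 0 < q t b}) ≤ e)
    (hq : ∀ t ∈ {t | 0 < q t a} ∩ {t | 0 < q t b}, |(q t a : ℝ) - (q t b : ℝ)| ≤ e)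
    {F : Set S} (hF : MeasurableSet F) :
    xMpq lam p q x a F ≤ xMpq lam p q y b F + (Cq * d + (e + Cp * Cq * e) * y Set.univ) := by
  refine bind_apply_le_bind_apply_add hxy (measurable_withDensity_mul hpm hqm a)
    (measurable_withDensity_mul hpm hqm b) hF (withDensity_mul_apply_le hpn hqb · F) fun s => ?_
  have hqab : ∀ t, 0 < q t a → 0 < q t b → q t a ≤ q t b + e := fun t ha hb => by
    have := (abs_le.1 (hq t ⟨ha, hb⟩)).2
    rw [← NNReal.coe_le_coe, NNReal.coe_add]
    linarith
  have hD : lam ({t | 0 < q t a} \ {t | 0 < q t b}) ≤ e :=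
    (measure_mono fun _ => Or.inl).trans hsd
  simpa only [withDensity_apply _ hF, hpn s, mul_one] using
    setLIntegral_mul_le_setLIntegral_mul_add (w := p s) (g := (q · b))
      (hpm.comp (measurable_const.prodMk measurable_id))
      (hqm.comp (measurable_id.prodMk measurable_const)) (hpb s) hqb hD hqab F

theorem tvDist_xMpq_le [MeasurableSpace A] [SFinite lam]
    (hpm : Measurable fun z : S × S => p z.1 z.2) (hqm : Measurable fun z : S × A => q z.1 z.2)
    {Cp Cq : ℝ≥0} (hpb : ∀ s t, p s t ≤ Cp) (hqb : ∀ t a, q t a ≤ Cq)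
    (hpn : ∀ s, ∫⁻ t, (p s t : ℝ≥0∞) ∂lam = 1) {x y : Measure S} [IsFiniteMeasure x]
    [IsFiniteMeasure y] {d e : ℝ≥0} (hxy : ∀ F, MeasurableSet F → x F ≤ y F + d)
    (hyx : ∀ F, MeasurableSet F → y F ≤ x F + d) {a b : A}
    (hsd : lam ({t | 0 < q t a} ∆ {t | 0 < q t b}) ≤ e)
    (hq : ∀ t ∈ {t | 0 < q t a} ∩ {t | 0 < q t b}, |(q t a : ℝ) - (q t b : ℝ)| ≤ e) :
    tvDist (xMpq lam p q x a) (xMpq lam p q y b) ≤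
      2 * ((Cq * d + (e + Cp * Cq * e) * (measureUnivNNReal x + d) : ℝ≥0) : ℝ) := by
  have := isFiniteMeasure_xMpq hpn (hqb · a) x
  have := isFiniteMeasure_xMpq hpn (hqb · b) y
  have hxX : x Set.univ ≤ measureUnivNNReal x + d := by
    simpa only [ENNReal.coe_add, coe_measureUnivNNReal] using le_self_add
  have hyX : y Set.univ ≤ measureUnivNNReal x + d := by
    simpa only [ENNReal.coe_add, coe_measureUnivNNReal] using hyx _ MeasurableSet.univ
  refine tvDist_le_of_forall_apply_le_add (fun F hF => ?_) fun F hF => ?_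
  · refine (xMpq_apply_le_add hpm hqm hpb hpn hxy (hqb · a) hsd hq hF).trans ?_
    push_cast
    gcongr
  · refine (xMpq_apply_le_add hpm hqm hpb hpn hyx (hqb · b) (symmDiff_comm (α := Set S) _ _ ▸ hsd)
      (fun t ht => abs_sub_comm (q t a : ℝ) _ ▸ hq t ⟨ht.2, ht.1⟩) hF).trans ?_
    push_cast
    gcongr

end Kernel

theorem exists_pos_lt_of_continuousAt_zero {f : ℝ≥0 → ℝ} (hf : ContinuousAt f 0) (hf0 : f 0 = 0)
    {ε : ℝ} (hε : 0 < ε) : ∃ d : ℝ≥0, 0 < d ∧ f d < ε := by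
  have hlt : ∀ᶠ d in nhdsWithin 0 (Set.Ioi 0), f d < ε :=
    (hf.tendsto.mono_left nhdsWithin_le_nhds).eventually_lt_const (hf0 ▸ hε)
  exact (eventually_mem_nhdsWithin.and hlt).exists

theorem stmt_17_general {S A : Type*} [MeasurableSpace S] [MetricSpace A] [MeasurableSpace A]
    (lam : Measure S) [SigmaFinite lam]
    (p : S → S → ℝ≥0) (hpm : Measurable fun z : S × S => p z.1 z.2)
    (hpb : ∃ C : ℝ≥0, ∀ s t, p s t ≤ C)
    (hpn : ∀ s, ∫⁻ t, (p s t : ℝ≥0∞) ∂lam = 1)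
    (q : S → A → ℝ≥0) (hqm : Measurable fun z : S × A => q z.1 z.2)
    (hqb : ∃ C : ℝ≥0, ∀ t a, q t a ≤ C)
    (hcont : ∀ ε : ℝ, 0 < ε → ∃ η : ℝ, 0 < η ∧ ∀ a b : A, dist a b < η →
      lam ({t | 0 < q t a} ∆ {t | 0 < q t b}) < ENNReal.ofReal ε ∧
      ∀ t ∈ {t | 0 < q t a} ∩ {t | 0 < q t b}, |(q t a : ℝ) - (q t b : ℝ)| < ε) :
    ∀ x : Measure S, IsFiniteMeasure x → x ≪ lam → ∀ a : A, ∀ ε : ℝ, 0 < ε →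
      ∃ δ : ℝ, 0 < δ ∧ ∀ y : Measure S, IsFiniteMeasure y → y ≪ lam →
        tvDist x y < δ → ∀ b : A, dist a b < δ →
          tvDist (xMpq lam p q x a) (xMpq lam p q y b) < ε := by
  obtain ⟨Cp, hCp⟩ := hpb
  obtain ⟨Cq, hCq⟩ := hqb
  intro x hx _ a ε hε
  obtain ⟨d, hd, hdε⟩ := exists_pos_lt_of_continuousAt_zero
    (f := fun d ↦ 2 * ((Cq * d + (d + Cp * Cq * d) * (measureUnivNNReal x + d) : ℝ≥0) : ℝ))
    (by fun_prop) (by simp) hε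
  obtain ⟨η, hη, hηd⟩ := hcont d hd
  refine ⟨min η d, lt_min hη hd, fun y hy _ htv b hab => ?_⟩
  have hδ : ENNReal.ofReal (min η d) ≤ d :=
    (ENNReal.ofReal_le_ofReal (min_le_right _ _)).trans_eq ENNReal.ofReal_coe_nnreal
  obtain ⟨hsd, hq⟩ := hηd a b (hab.trans_le (min_le_left _ _))
  refine (tvDist_xMpq_le hpm hqm hCp hCq hpn (fun F hF => ?_) (fun F hF => ?_)
    (hsd.le.trans_eq ENNReal.ofReal_coe_nnreal) (fun t ht => (hq t ht).le)).trans_lt hdε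
  · exact (apply_le_apply_add_of_tvDist_lt htv hF).trans (by gcongr)
  · exact (apply_le_apply_add_of_tvDist_lt (tvDist_comm x y ▸ htv) hF).trans (by gcongr)

/-- Under the stated continuity assumption on `q`, the map
`(x, a) ↦ xM_a` is jointly continuous from (finite nonnegative measures `≪ λ` with the
total variation distance) × `(A, ϱ)` into the finite measures with the total variation
distance. -/
theorem stmt_17 {S A : Type*}
    [MetricSpace S] [CompleteSpace S] [TopologicalSpace.SeparableSpace S]
    [MeasurableSpace S] [BorelSpace S]
    [MetricSpace A] [CompleteSpace A] [TopologicalSpace.SeparableSpace A]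
    [MeasurableSpace A] [BorelSpace A]
    (lam : Measure S) [SigmaFinite lam] (τ : Measure A) [SigmaFinite τ]
    (p : S → S → ℝ≥0) (hpm : Measurable fun z : S × S => p z.1 z.2)
    (hpb : ∃ C : ℝ≥0, ∀ s t, p s t ≤ C)
    (hpn : ∀ s, ∫⁻ t, (p s t : ℝ≥0∞) ∂lam = 1)
    (q : S → A → ℝ≥0) (hqm : Measurable fun z : S × A => q z.1 z.2)
    (hqb : ∃ C : ℝ≥0, ∀ t a, q t a ≤ C)
    (hqn : ∀ t, ∫⁻ a, (q t a : ℝ≥0∞) ∂τ = 1)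
    (hSpos : ∀ a : A, 0 < lam {t | 0 < q t a})
    (hcont : ∀ ε : ℝ, 0 < ε → ∃ η : ℝ, 0 < η ∧ ∀ a b : A, dist a b < η →
      lam ({t | 0 < q t a} ∆ {t | 0 < q t b}) < ENNReal.ofReal ε ∧
      ∀ t ∈ {t | 0 < q t a} ∩ {t | 0 < q t b}, |(q t a : ℝ) - (q t b : ℝ)| < ε) :
    ∀ x : Measure S, IsFiniteMeasure x → x ≪ lam → ∀ a : A, ∀ ε : ℝ, 0 < ε →
      ∃ δ : ℝ, 0 < δ ∧ ∀ y : Measure S, IsFiniteMeasure y → y ≪ lam →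
        tvDist x y < δ → ∀ b : A, dist a b < δ →
          tvDist (xMpq lam p q x a) (xMpq lam p q y b) < ε :=
  stmt_17_general lam p hpm hpb hpn q hqm hqb hcont
end
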